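/- arXiv:2301.05956 — 4 statements merged into one kernel-verified Lean document; each statement's English description precedes it below -/
import Mathlib

section
/- Let n, m ≥ 1 and let L₁,…,L_n and M₁,…,M_m be linear orders such that a linear order occurs (up to order isomorphism) among the nonempty orders in the list L₁,…,L_n if and only if it occurs among the nonempty orders in the list M₁,…,M_m. Then Ξ(L₁,…,L_n) ≅ Ξ(M₁,…,M_m). In particular, the shuffle is invariant under permuting its arguments, repeating arguments, and inserting or deleting copies of the empty order 𝟎 (as long as at least one argument remains). -/
/-!
Discarding the empty summands turns both shuffles into lexicographic sums over dense subsets of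
`ℚ`, which are again countable dense orders without endpoints, and in which every isomorphism type
of summand that occurs at all occurs densely on both sides. Colouring each index by the isomorphism
type of its summand, Cantor's back-and-forth argument, run with colours carried along, yields a
colour-preserving isomorphism of the index orders; summing isomorphisms of the matched summands
along it gives the isomorphism of the shuffles.
-/

/-- A subset of `ℚ` that is dense in the order of `ℚ`. -/
def DenseQ (D : Set ℚ) : Prop := ∀ a b : ℚ, a < b → ∃ q ∈ D, a < q ∧ q < b

def OrderDense {α : Type*} [LT α] (s : Set α) : Prop :=
  ∀ a b : α, a < b → ∃ c ∈ s, a < c ∧ c < b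

namespace OrderDense

variable {α : Type*} [LinearOrder α] {s t : Set α} {p : α → Prop}

theorem mono (hs : OrderDense s) (hst : s ⊆ t) : OrderDense t := fun a b hab =>
  (hs a b hab).imp fun _ ⟨hc, h⟩ => ⟨hst hc, h⟩

theorem preimage_subtype_val (hs : OrderDense s) (hsp : ∀ x ∈ s, p x) :
    OrderDense (Subtype.val ⁻¹' s : Set {x // p x}) := fun a b hab =>
  let ⟨c, hc, h⟩ := hs a b hab
  ⟨⟨c, hsp c hc⟩, hc, h⟩

theorem exists_mem_gt [NoMaxOrder α] (hs : OrderDense s) (a : α) : ∃ c ∈ s, a < c :=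
  let ⟨b, hab⟩ := exists_gt a
  (hs a b hab).imp fun _ ⟨hc, h, _⟩ => ⟨hc, h⟩

theorem exists_mem_lt [NoMinOrder α] (hs : OrderDense s) (a : α) : ∃ c ∈ s, c < a :=
  let ⟨b, hba⟩ := exists_lt a
  (hs b a hba).imp fun _ ⟨hc, _, h⟩ => ⟨hc, h⟩

theorem nonempty [NoMaxOrder α] [Nonempty α] (hs : OrderDense s) : s.Nonempty :=
  let ⟨c, hc, _⟩ := hs.exists_mem_gt (Classical.arbitrary α)
  ⟨c, hc⟩

theorem noMaxOrder_subtype [NoMaxOrder α] (hs : OrderDense s) (hsp : ∀ x ∈ s, p x) :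
    NoMaxOrder {x // p x} :=
  ⟨fun a => let ⟨c, hc, h⟩ := hs.exists_mem_gt a.1; ⟨⟨c, hsp c hc⟩, h⟩⟩

theorem noMinOrder_subtype [NoMinOrder α] (hs : OrderDense s) (hsp : ∀ x ∈ s, p x) :
    NoMinOrder {x // p x} :=
  ⟨fun a => let ⟨c, hc, h⟩ := hs.exists_mem_lt a.1; ⟨⟨c, hsp c hc⟩, h⟩⟩

theorem exists_mem_between_finsets [NoMinOrder α] [NoMaxOrder α] [Nonempty α]
    (hs : OrderDense s) (lo hi : Finset α) (h : ∀ x ∈ lo, ∀ y ∈ hi, x < y) :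
    ∃ m ∈ s, (∀ x ∈ lo, x < m) ∧ ∀ y ∈ hi, m < y := by
  have : DenselyOrdered α := ⟨fun a b hab => (hs a b hab).imp fun _ h => h.2⟩
  obtain ⟨m₀, hlo₀, hhi₀⟩ := Order.exists_between_finsets lo hi h
  obtain ⟨m₁, hlo₁, hm₁⟩ := Order.exists_between_finsets lo {m₀} (by simpa using hlo₀)
  obtain ⟨m, hm, h₁, h₀⟩ := hs m₁ m₀ (hm₁ m₀ (Finset.mem_singleton_self _))
  exact ⟨m, hm, fun x hx => (hlo₁ x hx).trans h₁, fun y hy => h₀.trans (hhi₀ y hy)⟩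

end OrderDense

namespace Order.PartialIso

variable {α β : Type*} [LinearOrder α] [LinearOrder β]

theorem mem_comm {F : PartialIso α β} {p : β × α} : p ∈ F.comm.val ↔ p.swap ∈ F.val := by
  change p ∈ F.val.image (Equiv.prodComm α β) ↔ _
  rw [← Finset.mem_coe, Finset.coe_image, Equiv.image_eq_preimage_symm]
  rfl

def insert (F : PartialIso α β) (a : α) (b : β)
    (h : ∀ p ∈ F.val, cmp p.1 a = cmp p.2 b) : PartialIso α β :=
  ⟨Insert.insert (a, b) F.val, fun p hp q hq => by
    rcases Finset.mem_insert.1 hp with rfl | hp <;> rcases Finset.mem_insert.1 hq with rfl | hq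
    · simp only [cmp_self_eq_eq]
    · rw [cmp_eq_cmp_symm]; exact h _ hq
    · exact h _ hp
    · exact F.prop _ hp _ hq⟩

end Order.PartialIso

namespace Order

variable {α β C : Type*} [LinearOrder α] [LinearOrder β]

def ColoredPartialIso (c : α → C) (d : β → C) : Type _ :=
  { F : PartialIso α β // ∀ p ∈ F.val, c p.1 = d p.2 }

namespace ColoredPartialIso

variable {c : α → C} {d : β → C}

noncomputable instance : Preorder (ColoredPartialIso c d) := Subtype.preorder _

instance : Inhabited (ColoredPartialIso c d) :=
  ⟨⟨default, fun _ h => (Finset.notMem_empty _ h).elim⟩⟩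

def comm (F : ColoredPartialIso c d) : ColoredPartialIso d c :=
  ⟨F.val.comm, fun p hp => (F.prop p.swap (PartialIso.mem_comm.1 hp)).symm⟩

theorem exists_across [NoMinOrder β] [NoMaxOrder β] [Nonempty β]
    (hcd : ∀ a, OrderDense (d ⁻¹' {c a})) (F : ColoredPartialIso c d) (a : α) :
    ∃ b, d b = c a ∧ ∀ p ∈ F.val.val, cmp p.1 a = cmp p.2 b := by
  by_cases h : ∃ b, (a, b) ∈ F.val.val
  · obtain ⟨b, hb⟩ := h
    exact ⟨b, (F.prop _ hb).symm, fun p hp => F.val.prop _ hp _ hb⟩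
  let below := {p ∈ F.val.val | p.1 < a}.image Prod.snd
  let above := {p ∈ F.val.val | a < p.1}.image Prod.snd
  have below_lt_above : ∀ x ∈ below, ∀ y ∈ above, x < y := by
    simp only [below, above, Finset.mem_image, Finset.mem_filter]
    rintro _ ⟨p, ⟨hp, hpa⟩, rfl⟩ _ ⟨q, ⟨hq, haq⟩, rfl⟩
    rw [← lt_iff_lt_of_cmp_eq_cmp (F.val.prop _ hp _ hq)]
    exact hpa.trans haq
  obtain ⟨b, hb, hbelow, habove⟩ := (hcd a).exists_mem_between_finsets _ _ below_lt_above
  refine ⟨b, hb, fun p hp => ?_⟩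
  have hpa : p.1 ≠ a := fun he => h ⟨p.2, he ▸ hp⟩
  rcases hpa.lt_or_gt with hlt | hgt
  · have hpb := hbelow p.2 (Finset.mem_image_of_mem _ (Finset.mem_filter.2 ⟨hp, hlt⟩))
    rw [(cmp_eq_lt_iff _ _).2 hlt, (cmp_eq_lt_iff _ _).2 hpb]
  · have hbp := habove p.2 (Finset.mem_image_of_mem _ (Finset.mem_filter.2 ⟨hp, hgt⟩))
    rw [(cmp_eq_gt_iff _ _).2 hgt, (cmp_eq_gt_iff _ _).2 hbp]

def definedAtLeft [NoMinOrder β] [NoMaxOrder β] [Nonempty β]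
    (hcd : ∀ a, OrderDense (d ⁻¹' {c a})) (a : α) : Cofinal (ColoredPartialIso c d) where
  carrier := {F | ∃ b, (a, b) ∈ F.val.val}
  isCofinal F := by
    obtain ⟨b, hba, hb⟩ := exists_across hcd F a
    refine ⟨⟨F.val.insert a b hb, fun p hp => ?_⟩, ⟨b, Finset.mem_insert_self _ _⟩,
      Finset.subset_insert _ _⟩
    rcases Finset.mem_insert.1 hp with rfl | hp
    exacts [hba.symm, F.prop _ hp]

def definedAtRight [NoMinOrder α] [NoMaxOrder α] [Nonempty α]
    (hdc : ∀ b, OrderDense (c ⁻¹' {d b})) (b : β) : Cofinal (ColoredPartialIso c d) where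
  carrier := {F | ∃ a, (a, b) ∈ F.val.val}
  isCofinal F := by
    obtain ⟨F', ⟨a, ha⟩, hF⟩ := (definedAtLeft hdc b).isCofinal F.comm
    refine ⟨F'.comm, ⟨a, PartialIso.mem_comm.2 ha⟩, fun p hp => PartialIso.mem_comm.2 ?_⟩
    exact hF (PartialIso.mem_comm.2 (by simpa using hp))

end ColoredPartialIso

theorem exists_orderIso_of_orderDense_colors [Countable α] [NoMinOrder α] [NoMaxOrder α]
    [Nonempty α] [Countable β] [NoMinOrder β] [NoMaxOrder β] [Nonempty β]
    (c : α → C) (d : β → C) (hcd : ∀ a, OrderDense (d ⁻¹' {c a}))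
    (hdc : ∀ b, OrderDense (c ⁻¹' {d b})) :
    ∃ φ : α ≃o β, ∀ a, d (φ a) = c a := by
  cases nonempty_encodable α
  cases nonempty_encodable β
  let cofinals : α ⊕ β → Cofinal (ColoredPartialIso c d) :=
    Sum.elim (ColoredPartialIso.definedAtLeft hcd) (ColoredPartialIso.definedAtRight hdc)
  let I : Ideal (ColoredPartialIso c d) := idealOfCofinals default cofinals
  have forth (a : α) : ∃ b, ∃ F ∈ I, (a, b) ∈ F.val.val :=
    let ⟨F, ⟨b, hb⟩, hF⟩ := cofinal_meets_idealOfCofinals default cofinals (.inl a)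
    ⟨b, F, hF, hb⟩
  have back (b : β) : ∃ a, ∃ F ∈ I, (a, b) ∈ F.val.val :=
    let ⟨F, ⟨a, ha⟩, hF⟩ := cofinal_meets_idealOfCofinals default cofinals (.inr b)
    ⟨a, F, hF, ha⟩
  choose φ hφ using forth
  choose ψ hψ using back
  have cmp_eq (a : α) (b : β) : cmp a (ψ b) = cmp (φ a) b := by
    obtain ⟨F, hF, haF⟩ := hφ a
    obtain ⟨G, hG, hbG⟩ := hψ b
    obtain ⟨H, -, hFH, hGH⟩ := I.directed _ hF _ hG
    exact H.val.prop _ (hFH haF) _ (hGH hbG)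
  refine ⟨OrderIso.ofCmpEqCmp φ ψ cmp_eq, fun a => ?_⟩
  obtain ⟨F, -, haF⟩ := hφ a
  exact (F.prop _ haF).symm

end Order

namespace OrderIso

variable {ι κ : Type*} [LinearOrder ι] [LinearOrder κ] {F : ι → Type*} {G : κ → Type*}
  [∀ i, LinearOrder (F i)] [∀ k, LinearOrder (G k)]

noncomputable def sigmaLexCongr (e : ι ≃o κ) (h : ∀ i, F i ≃o G (e i)) :
    (Σₗ i, F i) ≃o Σₗ k, G k :=
  StrictMono.orderIsoOfSurjective (fun x => toLex ⟨e (ofLex x).1, h _ (ofLex x).2⟩)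
    (fun x y hxy => by
      cases hxy with
      | left _ _ hij => exact Sigma.Lex.left _ _ (e.lt_iff_lt.2 hij)
      | right _ _ hab => exact Sigma.Lex.right _ _ ((h _).lt_iff_lt.2 hab))
    (by
      rintro ⟨k, y⟩
      obtain ⟨i, rfl⟩ := e.surjective k
      refine ⟨toLex ⟨i, (h i).symm y⟩, ?_⟩
      change toLex (⟨e i, h i ((h i).symm y)⟩ : Σ k, G k) = _
      rw [apply_symm_apply]
      rfl)

variable (F) in
noncomputable def sigmaLexNonempty : (Σₗ i : {i // Nonempty (F i)}, F i) ≃o Σₗ i, F i :=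
  StrictMono.orderIsoOfSurjective (fun x => toLex ⟨(ofLex x).1.1, (ofLex x).2⟩)
    (fun x y hxy => by
      cases hxy with
      | left _ _ hij => exact Sigma.Lex.left _ _ (Subtype.coe_lt_coe.2 hij)
      | right _ _ hab => exact Sigma.Lex.right _ _ hab)
    (fun ⟨i, x⟩ => ⟨toLex ⟨⟨i, ⟨x⟩⟩, x⟩, rfl⟩)

end OrderIso

section SigmaLex

variable {ι κ : Type*}
  [LinearOrder ι] [Countable ι] [Nonempty ι] [NoMinOrder ι] [NoMaxOrder ι]
  [LinearOrder κ] [Countable κ] [Nonempty κ] [NoMinOrder κ] [NoMaxOrder κ]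
  {F : ι → Type*} {G : κ → Type*} [∀ i, LinearOrder (F i)] [∀ k, LinearOrder (G k)]

theorem nonempty_sigmaLex_orderIso_of_orderDense
    (hFG : ∀ i, OrderDense {k | Nonempty (F i ≃o G k)})
    (hGF : ∀ k, OrderDense {i | Nonempty (G k ≃o F i)}) :
    Nonempty ((Σₗ i, F i) ≃o Σₗ k, G k) := by
  -- colour every summand, of `F` or of `G`, by the set of summands of `G` isomorphic to it
  let c (i : ι) : Set κ := {k | Nonempty (F i ≃o G k)}
  let d (k : κ) : Set κ := {k' | Nonempty (G k ≃o G k')}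
  have hcd (i : ι) : OrderDense (d ⁻¹' {c i}) := (hFG i).mono fun k ⟨e⟩ => by
    ext k'
    exact ⟨fun ⟨e'⟩ => ⟨e.trans e'⟩, fun ⟨e'⟩ => ⟨e.symm.trans e'⟩⟩
  have hdc (k : κ) : OrderDense (c ⁻¹' {d k}) := (hGF k).mono fun i ⟨e⟩ => by
    ext k'
    exact ⟨fun ⟨e'⟩ => ⟨e.trans e'⟩, fun ⟨e'⟩ => ⟨e.symm.trans e'⟩⟩
  obtain ⟨φ, hφ⟩ := Order.exists_orderIso_of_orderDense_colors c d hcd hdc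
  have fiber (i : ι) : Nonempty (F i ≃o G (φ i)) := by
    obtain ⟨k, ⟨e⟩⟩ := (hFG i).nonempty
    obtain ⟨e'⟩ : k ∈ d (φ i) := (hφ i).symm ▸ ⟨e⟩
    exact ⟨e.trans e'.symm⟩
  exact ⟨OrderIso.sigmaLexCongr φ fun i => (fiber i).some⟩

theorem nonempty_sigmaLex_orderIso_of_orderDense_of_nonempty
    (hFG : ∀ i, Nonempty (F i) → OrderDense {k | Nonempty (F i ≃o G k)})
    (hGF : ∀ k, Nonempty (G k) → OrderDense {i | Nonempty (G k ≃o F i)}) :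
    Nonempty ((Σₗ i, F i) ≃o Σₗ k, G k) := by
  suffices Nonempty ((Σₗ i : {i // Nonempty (F i)}, F i) ≃o
      Σₗ k : {k // Nonempty (G k)}, G k) from
    this.map fun e => (OrderIso.sigmaLexNonempty F).symm.trans
      (e.trans (OrderIso.sigmaLexNonempty G))
  rcases isEmpty_or_nonempty {i // Nonempty (F i)} with hι | ⟨i₀, hi₀⟩
  · have : IsEmpty {k // Nonempty (G k)} := ⟨fun ⟨k, hk⟩ =>
      let ⟨i, ⟨e⟩⟩ := (hGF k hk).nonempty
      hι.false ⟨i, hk.map e⟩⟩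
    have : IsEmpty (Σₗ i : {i // Nonempty (F i)}, F i) := inferInstanceAs (IsEmpty (Sigma _))
    have : IsEmpty (Σₗ k : {k // Nonempty (G k)}, G k) := inferInstanceAs (IsEmpty (Sigma _))
    exact ⟨OrderIso.ofIsEmpty _ _⟩
  obtain ⟨k₀, ⟨e₀⟩⟩ := (hFG i₀ hi₀).nonempty
  have hk₀ : Nonempty (G k₀) := hi₀.map e₀
  have : Nonempty {i // Nonempty (F i)} := ⟨⟨i₀, hi₀⟩⟩
  have : Nonempty {k // Nonempty (G k)} := ⟨⟨k₀, hk₀⟩⟩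
  have := (hFG i₀ hi₀).noMinOrder_subtype fun k ⟨e⟩ => hi₀.map e
  have := (hFG i₀ hi₀).noMaxOrder_subtype fun k ⟨e⟩ => hi₀.map e
  have := (hGF k₀ hk₀).noMinOrder_subtype fun i ⟨e⟩ => hk₀.map e
  have := (hGF k₀ hk₀).noMaxOrder_subtype fun i ⟨e⟩ => hk₀.map e
  exact nonempty_sigmaLex_orderIso_of_orderDense
    (fun i => (hFG i i.2).preimage_subtype_val fun _ ⟨e⟩ => i.2.map e)
    (fun k => (hGF k k.2).preimage_subtype_val fun _ ⟨e⟩ => k.2.map e)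

end SigmaLex

theorem shuffle_well_defined_general {n m : ℕ}
    (L : Fin n → Type*) (M : Fin m → Type*)
    [∀ i, LinearOrder (L i)] [∀ j, LinearOrder (M j)]
    (f : ℚ → Fin n) (g : ℚ → Fin m)
    (hf : ∀ i : Fin n, DenseQ (f ⁻¹' {i}))
    (hg : ∀ j : Fin m, DenseQ (g ⁻¹' {j}))
    (hLM : ∀ i : Fin n, Nonempty (L i) → ∃ j : Fin m, Nonempty (L i ≃o M j))
    (hML : ∀ j : Fin m, Nonempty (M j) → ∃ i : Fin n, Nonempty (M j ≃o L i)) :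
    Nonempty ((Σₗ q : ℚ, L (f q)) ≃o (Σₗ q : ℚ, M (g q))) := by
  refine nonempty_sigmaLex_orderIso_of_orderDense_of_nonempty (fun q hq => ?_) fun q hq => ?_
  · obtain ⟨j, hj⟩ := hLM (f q) hq
    exact OrderDense.mono (hg j) fun q' (hq' : g q' = j) =>
      show Nonempty (_ ≃o M (g q')) from hq' ▸ hj
  · obtain ⟨i, hi⟩ := hML (g q) hq
    exact OrderDense.mono (hf i) fun q' (hq' : f q' = i) =>
      show Nonempty (_ ≃o L (f q')) from hq' ▸ hi

/-- the shuffle only depends on the multiset of isomorphism classes of the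
nonempty orders in the list (whence it is invariant under permuting arguments, repeating
arguments, and inserting or deleting copies of the empty order `𝟎`). -/
theorem shuffle_well_defined {n m : ℕ} (hn : 1 ≤ n) (hm : 1 ≤ m)
    (L : Fin n → Type*) (M : Fin m → Type*)
    [∀ i, LinearOrder (L i)] [∀ j, LinearOrder (M j)]
    (f : ℚ → Fin n) (g : ℚ → Fin m)
    (hf : ∀ i : Fin n, DenseQ (f ⁻¹' {i}))
    (hg : ∀ j : Fin m, DenseQ (g ⁻¹' {j}))
    (hLM : ∀ i : Fin n, Nonempty (L i) → ∃ j : Fin m, Nonempty (L i ≃o M j))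
    (hML : ∀ j : Fin m, Nonempty (M j) → ∃ i : Fin n, Nonempty (M j ≃o L i)) :
    Nonempty ((Σₗ q : ℚ, L (f q)) ≃o (Σₗ q : ℚ, M (g q))) :=
  shuffle_well_defined_general L M f g hf hg hLM hML
end

section
/- (Recursive reconstruction lemma.) Fix n ∈ ℕ. For each j ∈ {0,1,…,n+1} let L_j be a function from ℤ to linear orders such that: L₀(k) ∈ dLO_fd¹¹ for every k ≥ 0 and L₀(k) = 𝟎 for every k < 0; L_{n+1}(k) ∈ dLO_fd¹¹ for every k ≤ 0 and L_{n+1}(k) = 𝟎 for every k > 0; L_j(k) ∈ dLO_fd¹¹ for every k ∈ ℤ and every 1 ≤ j ≤ n; for each 0 ≤ j ≤ n there exist s_j ≥ 0 and p_j > 0 with L_j(s_j + p_j + k) ≅ L_j(s_j + k) for every k ∈ ℕ; and for each 1 ≤ j ≤ n+1 there exist s'_j ≤ 0 and p'_j > 0 with L_j(s'_j − p'_j − k) ≅ L_j(s'_j − k) for every k ∈ ℕ. Then L := Σ_{k∈ℤ} L₀(k) + Ξ(Σ_{k∈ℤ} L₁(k), …, Σ_{k∈ℤ} L_n(k)) +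 Σ_{k∈ℤ} L_{n+1}(k) belongs to dLO_fd¹¹ (for n = 0 the middle shuffle term is 𝟎). -/
/-- Bundled linear orders (in `Type 0`). -/
structure BLinOrd : Type 1 where
  carrier : Type
  [str : LinearOrder carrier]

attribute [instance] BLinOrd.str

/-- The bundled linear order on a given type. -/
def BLinOrd.of (α : Type) [LinearOrder α] : BLinOrd := ⟨α⟩

/-- The class of finite description linear orders: the smallest class of linear orders
containing `𝟎` and `𝟏` that is closed under order isomorphism, binary order sums,
the anti-lexicographic products `L·ω` and `L·ω*`, and shuffles of finite nonempty lists
of its members (realized via a coloring `f : ℚ → Fin n` with order-dense fibers; note that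
such an `f` exists only when `n ≥ 1`). -/
inductive LOfd : BLinOrd → Prop
  | empty : LOfd (BLinOrd.of (Fin 0))
  | one : LOfd (BLinOrd.of (Fin 1))
  | iso {X Y : BLinOrd} : LOfd X → Nonempty (X.carrier ≃o Y.carrier) → LOfd Y
  | add {X Y : BLinOrd} : LOfd X → LOfd Y → LOfd (BLinOrd.of (X.carrier ⊕ₗ Y.carrier))
  | mulOmega {X : BLinOrd} : LOfd X → LOfd (BLinOrd.of (ℕ ×ₗ X.carrier))
  | mulOmegaStar {X : BLinOrd} : LOfd X → LOfd (BLinOrd.of (ℕᵒᵈ ×ₗ X.carrier))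
  | shuffle {n : ℕ} (L : Fin n → BLinOrd) (f : ℚ → Fin n) :
      (∀ j, LOfd (L j)) → (∀ j : Fin n, DenseQ (f ⁻¹' {j})) →
      LOfd (BLinOrd.of (Σₗ q : ℚ, (L (f q)).carrier))

/-- A linear order is discrete if every non-maximal element has an immediate successor
and every non-minimal element has an immediate predecessor. -/
def IsDiscreteLO (α : Type*) [LinearOrder α] : Prop :=
  (∀ a : α, (∃ b, a < b) → ∃ b, a ⋖ b) ∧ (∀ a : α, (∃ b, b < a) → ∃ b, b ⋖ a)

/-- Bounded discrete finite description linear orders: discrete members of `LOfd` with a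
minimum element and a maximum element. -/
def dLOfd11 (X : BLinOrd) : Prop :=
  LOfd X ∧ IsDiscreteLO X.carrier ∧
    (∃ a : X.carrier, ∀ x, a ≤ x) ∧ (∃ a : X.carrier, ∀ x, x ≤ a)

/-- `S` is (isomorphic to) the shuffle `Ξ(L 0, …, L (n-1))` of the finite list `L` of
linear orders: for `n = 0` the shuffle is the empty order, and for `n ≥ 1` it is
`Σ_{q ∈ ℚ} L (f q)` for a (any) coloring `f : ℚ → Fin n` all of whose fibers are dense
in `ℚ`. -/
def IsShuffleOf (S : BLinOrd) {n : ℕ} (L : Fin n → BLinOrd) : Prop :=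
  (n = 0 ∧ IsEmpty S.carrier) ∨
    ∃ f : ℚ → Fin n, (∀ j : Fin n, DenseQ (f ⁻¹' {j})) ∧
      Nonempty (S.carrier ≃o Σₗ q : ℚ, (L (f q)).carrier)


/-!
Each of the three outer pieces is a `ℤ`-indexed sum of blocks. An eventually periodic
`ℕ`-indexed sum `Σₖ Mₖ` is a finite sum followed by `(M_s + ⋯ + M_{s+p-1})·ω`, and dually for
`ω*`; splitting `ℤ = ω* + ω` shows that the pieces and hence `L` are finite description.
Inside a sum of bounded discrete blocks over `ℤ`, the maximum of a block is covered by the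
minimum of the next nonempty one, so only the ends of the support lack neighbours. Thus the
first piece has a minimum and no maximum, each summand of the shuffle (and so the shuffle itself)
has neither, and the last piece has a maximum and no minimum: gluing them creates no endpoint
without a neighbour.
-/

open OrderDual

lemma LOfd.of_isEmpty {X : BLinOrd} (h : IsEmpty X.carrier) : LOfd X :=
  LOfd.empty.iso ⟨@OrderIso.ofIsEmpty _ _ _ _ Fin.isEmpty' h⟩

lemma nonempty_orderIso_sigmaLex_fin_succ {m : ℕ} (M : Fin (m + 1) → Type*)
    [∀ i, LinearOrder (M i)] :
    Nonempty ((M 0 ⊕ₗ Σₗ i : Fin m, M i.succ) ≃o Σₗ i : Fin (m + 1), M i) := by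
  let g : (M 0 ⊕ₗ Σₗ i : Fin m, M i.succ) → Σₗ i : Fin (m + 1), M i
    | Sum.inl x => ⟨0, x⟩
    | Sum.inr ⟨i, x⟩ => ⟨i.succ, x⟩
  refine ⟨StrictMono.orderIsoOfSurjective g ?_ ?_⟩
  · rintro (x | ⟨i, x⟩) (y | ⟨i', y⟩) h
    · exact Sigma.Lex.right _ _ (Sum.Lex.inl_lt_inl_iff.1 h)
    · exact Sigma.Lex.left _ _ (Fin.succ_pos i')
    · exact absurd h Sum.Lex.not_inr_lt_inl
    · cases Sum.Lex.inr_lt_inr_iff.1 h with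
      | left _ _ hi => exact Sigma.Lex.left _ _ (Fin.succ_lt_succ_iff.2 hi)
      | right _ _ hx => exact Sigma.Lex.right _ _ hx
  · rintro ⟨i, x⟩
    induction i using Fin.cases with
    | zero => exact ⟨toLex (Sum.inl x), rfl⟩
    | succ i => exact ⟨toLex (Sum.inr ⟨i, x⟩), rfl⟩

lemma LOfd.sigmaLex_fin {m : ℕ} (N : Fin m → BLinOrd) (hN : ∀ i, LOfd (N i)) :
    LOfd (BLinOrd.of (Σₗ i : Fin m, (N i).carrier)) := by
  induction m with
  | zero => exact LOfd.of_isEmpty ⟨fun z => (ofLex z).1.elim0⟩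
  | succ m ih =>
    obtain ⟨e⟩ := nonempty_orderIso_sigmaLex_fin_succ fun i => (N i).carrier
    exact (LOfd.add (hN 0) (ih _ fun i => hN i.succ)).iso ⟨e⟩

section SigmaLexIso

variable (M : ℕ → Type*) [∀ k, LinearOrder (M k)]

lemma nonempty_orderIso_sigmaLex_nat_succ :
    Nonempty ((M 0 ⊕ₗ Σₗ k : ℕ, M (k + 1)) ≃o Σₗ k : ℕ, M k) := by
  let g : (M 0 ⊕ₗ Σₗ k : ℕ, M (k + 1)) → Σₗ k : ℕ, M k
    | Sum.inl x => ⟨0, x⟩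
    | Sum.inr ⟨k, x⟩ => ⟨k + 1, x⟩
  refine ⟨StrictMono.orderIsoOfSurjective g ?_ ?_⟩
  · rintro (x | ⟨k, x⟩) (y | ⟨k', y⟩) h
    · exact Sigma.Lex.right _ _ (Sum.Lex.inl_lt_inl_iff.1 h)
    · exact Sigma.Lex.left _ _ k'.succ_pos
    · exact absurd h Sum.Lex.not_inr_lt_inl
    · cases Sum.Lex.inr_lt_inr_iff.1 h with
      | left _ _ hk => exact Sigma.Lex.left _ _ (Nat.succ_lt_succ hk)
      | right _ _ hx => exact Sigma.Lex.right _ _ hx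
  · rintro ⟨_ | k, x⟩
    · exact ⟨toLex (Sum.inl x), rfl⟩
    · exact ⟨toLex (Sum.inr ⟨k, x⟩), rfl⟩

lemma nonempty_orderIso_sigmaLex_natDual_succ :
    Nonempty (((Σₗ k : ℕᵒᵈ, M (ofDual k + 1)) ⊕ₗ M 0) ≃o Σₗ k : ℕᵒᵈ, M (ofDual k)) := by
  let g : ((Σₗ k : ℕᵒᵈ, M (ofDual k + 1)) ⊕ₗ M 0) → Σₗ k : ℕᵒᵈ, M (ofDual k)
    | Sum.inl ⟨k, x⟩ => ⟨toDual (ofDual k + 1), x⟩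
    | Sum.inr x => ⟨toDual 0, x⟩
  refine ⟨StrictMono.orderIsoOfSurjective g ?_ ?_⟩
  · rintro (⟨k, x⟩ | x) (⟨k', y⟩ | y) h
    · cases Sum.Lex.inl_lt_inl_iff.1 h with
      | left _ _ hk =>
        exact Sigma.Lex.left _ _ (toDual_lt_toDual.2 (Nat.succ_lt_succ (ofDual_lt_ofDual.2 hk)))
      | right _ _ hx => exact Sigma.Lex.right _ _ hx
    · exact Sigma.Lex.left _ _ (ofDual k).succ_pos
    · exact absurd h Sum.Lex.not_inr_lt_inl
    · exact Sigma.Lex.right _ _ (Sum.Lex.inr_lt_inr_iff.1 h)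
  · rintro ⟨k, x⟩
    obtain _ | k := k
    · exact ⟨toLex (Sum.inr x), rfl⟩
    · exact ⟨toLex (Sum.inl ⟨toDual k, x⟩), rfl⟩

variable {M}

lemma nonempty_orderIso_add_mul {p : ℕ} (hper : ∀ k, Nonempty (M (k + p) ≃o M k)) (r : ℕ) :
    ∀ q, Nonempty (M r ≃o M (r + p * q))
  | 0 => ⟨OrderIso.refl _⟩
  | q + 1 => by
    obtain ⟨e⟩ := nonempty_orderIso_add_mul hper r q
    obtain ⟨e'⟩ := hper (r + p * q)
    rw [Nat.mul_succ, ← Nat.add_assoc]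
    exact ⟨e.trans e'.symm⟩

lemma nonempty_orderIso_sigmaLex_nat_of_periodic {p : ℕ} (hp : 0 < p)
    (hper : ∀ k, Nonempty (M (k + p) ≃o M k)) :
    Nonempty ((ℕ ×ₗ Σₗ i : Fin p, M i) ≃o Σₗ k : ℕ, M k) := by
  have E r q := (nonempty_orderIso_add_mul hper r q).some
  let g : (ℕ ×ₗ Σₗ i : Fin p, M i) → Σₗ k : ℕ, M k
    | (q, ⟨i, x⟩) => ⟨i + p * q, E i q x⟩
  refine ⟨StrictMono.orderIsoOfSurjective g ?_ ?_⟩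
  · rintro ⟨q, i, x⟩ ⟨q', i', y⟩ h
    rcases Prod.Lex.lt_iff.1 h with hq | ⟨hq, h⟩
    · have : p * q + p ≤ p * q' := Nat.mul_succ p q ▸ Nat.mul_le_mul_left p hq
      exact Sigma.Lex.left _ _ (by omega)
    · obtain rfl : q = q' := hq
      cases h with
      | left _ _ hi => exact Sigma.Lex.left _ _ (by omega)
      | right _ _ hx => exact Sigma.Lex.right _ _ ((E _ _).strictMono hx)
  · rintro ⟨k, x⟩
    obtain ⟨q, r, hr, rfl⟩ : ∃ q r, r < p ∧ r + p * q = k :=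
      ⟨k / p, k % p, Nat.mod_lt _ hp, Nat.mod_add_div k p⟩
    exact ⟨toLex (q, toLex ⟨⟨r, hr⟩, (E r q).symm x⟩),
      congrArg (Sigma.mk (r + p * q)) ((E r q).apply_symm_apply x)⟩

lemma nonempty_orderIso_sigmaLex_natDual_of_periodic {p : ℕ} (hp : 0 < p)
    (hper : ∀ k, Nonempty (M (k + p) ≃o M k)) :
    Nonempty ((ℕᵒᵈ ×ₗ Σₗ i : Fin p, M i.rev) ≃o Σₗ k : ℕᵒᵈ, M (ofDual k)) := by
  have E r q := (nonempty_orderIso_add_mul hper r q).some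
  let g : (ℕᵒᵈ ×ₗ Σₗ i : Fin p, M i.rev) → Σₗ k : ℕᵒᵈ, M (ofDual k)
    | (q, ⟨i, x⟩) => ⟨toDual (i.rev + p * ofDual q), E i.rev (ofDual q) x⟩
  refine ⟨StrictMono.orderIsoOfSurjective g ?_ ?_⟩
  · rintro ⟨q, i, x⟩ ⟨q', i', y⟩ h
    have := Fin.val_rev i; have := Fin.val_rev i'
    rcases Prod.Lex.lt_iff.1 h with hq | ⟨hq, h⟩
    · have : p * ofDual q' + p ≤ p * ofDual q :=
        Nat.mul_succ p _ ▸ Nat.mul_le_mul_left p (ofDual_lt_ofDual.2 hq)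
      exact Sigma.Lex.left _ _ (toDual_lt_toDual.2 (by omega))
    · obtain rfl : q = q' := hq
      cases h with
      | left _ _ hi => exact Sigma.Lex.left _ _ (toDual_lt_toDual.2 (by omega))
      | right _ _ hx => exact Sigma.Lex.right _ _ ((E _ _).strictMono hx)
  · rintro ⟨k, x⟩
    obtain ⟨q, i, rfl⟩ : ∃ q i, (i : Fin p).rev + p * q = ofDual k := by
      refine ⟨ofDual k / p, (⟨ofDual k % p, Nat.mod_lt _ hp⟩ : Fin p).rev, ?_⟩
      rw [Fin.rev_rev]
      exact Nat.mod_add_div _ p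
    exact ⟨toLex (toDual q, toLex ⟨i, (E i.rev q).symm x⟩),
      congrArg (Sigma.mk (toDual (i.rev + p * q))) ((E i.rev q).apply_symm_apply x)⟩

end SigmaLexIso

lemma LOfd.sigmaLex_nat (M : ℕ → BLinOrd) (hM : ∀ k, LOfd (M k)) (s : ℕ) {p : ℕ} (hp : 0 < p)
    (hper : ∀ k, s ≤ k → Nonempty ((M (k + p)).carrier ≃o (M k).carrier)) :
    LOfd (BLinOrd.of (Σₗ k : ℕ, (M k).carrier)) := by
  induction s generalizing M with
  | zero =>
    obtain ⟨e⟩ := nonempty_orderIso_sigmaLex_nat_of_periodic (M := fun k => (M k).carrier) hp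
      fun k => hper k k.zero_le
    exact (LOfd.sigmaLex_fin _ fun i => hM i).mulOmega.iso ⟨e⟩
  | succ s ih =>
    obtain ⟨e⟩ := nonempty_orderIso_sigmaLex_nat_succ fun k => (M k).carrier
    refine ((hM 0).add (ih (fun k => M (k + 1)) (fun k => hM _) fun k hk => ?_)).iso ⟨e⟩
    rw [Nat.add_right_comm]
    exact hper (k + 1) (Nat.succ_le_succ hk)

lemma LOfd.sigmaLex_natDual (M : ℕ → BLinOrd) (hM : ∀ k, LOfd (M k)) (s : ℕ) {p : ℕ}
    (hp : 0 < p) (hper : ∀ k, s ≤ k → Nonempty ((M (k + p)).carrier ≃o (M k).carrier)) :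
    LOfd (BLinOrd.of (Σₗ k : ℕᵒᵈ, (M (ofDual k)).carrier)) := by
  induction s generalizing M with
  | zero =>
    obtain ⟨e⟩ := nonempty_orderIso_sigmaLex_natDual_of_periodic (M := fun k => (M k).carrier) hp
      fun k => hper k k.zero_le
    exact (LOfd.sigmaLex_fin _ fun i => hM i.rev).mulOmegaStar.iso ⟨e⟩
  | succ s ih =>
    obtain ⟨e⟩ := nonempty_orderIso_sigmaLex_natDual_succ fun k => (M k).carrier
    refine ((ih (fun k => M (k + 1)) (fun k => hM _) fun k hk => ?_).add (hM 0)).iso ⟨e⟩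
    rw [Nat.add_right_comm]
    exact hper (k + 1) (Nat.succ_le_succ hk)

lemma nonempty_orderIso_sigmaLex_int (M : ℤ → Type*) [∀ k, LinearOrder (M k)] :
    Nonempty (((Σₗ k : ℕᵒᵈ, M (-1 - ofDual k)) ⊕ₗ Σₗ k : ℕ, M k) ≃o Σₗ k : ℤ, M k) := by
  let g : ((Σₗ k : ℕᵒᵈ, M (-1 - ofDual k)) ⊕ₗ Σₗ k : ℕ, M k) → Σₗ k : ℤ, M k
    | Sum.inl ⟨k, x⟩ => ⟨-1 - ofDual k, x⟩
    | Sum.inr ⟨k, x⟩ => ⟨k, x⟩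
  refine ⟨StrictMono.orderIsoOfSurjective g ?_ ?_⟩
  · rintro (⟨k, x⟩ | ⟨k, x⟩) (⟨k', y⟩ | ⟨k', y⟩) h
    · cases Sum.Lex.inl_lt_inl_iff.1 h with
      | left _ _ hk =>
        have : ofDual k' < ofDual k := hk
        exact Sigma.Lex.left _ _ (by omega)
      | right _ _ hx => exact Sigma.Lex.right _ _ hx
    · exact Sigma.Lex.left _ _ (by omega)
    · exact absurd h Sum.Lex.not_inr_lt_inl
    · cases Sum.Lex.inr_lt_inr_iff.1 h with
      | left _ _ hk => exact Sigma.Lex.left _ _ (Int.ofNat_lt.2 hk)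
      | right _ _ hx => exact Sigma.Lex.right _ _ hx
  · rintro ⟨k, x⟩
    obtain ⟨m, rfl | rfl⟩ : ∃ m : ℕ, k = m ∨ k = -1 - m := by
      rcases le_or_gt 0 k with h | h
      · exact ⟨k.toNat, Or.inl (by omega)⟩
      · exact ⟨(-1 - k).toNat, Or.inr (by omega)⟩
    · exact ⟨toLex (Sum.inr ⟨m, x⟩), rfl⟩
    · exact ⟨toLex (Sum.inl ⟨toDual m, x⟩), rfl⟩

lemma LOfd.sigmaLex_int (M : ℤ → BLinOrd) (hM : ∀ k, LOfd (M k)) {s p : ℤ} (hp : 0 < p)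
    (hper : ∀ k : ℕ, Nonempty ((M (s + p + k)).carrier ≃o (M (s + k)).carrier))
    {s' p' : ℤ} (hp' : 0 < p')
    (hper' : ∀ k : ℕ, Nonempty ((M (s' - p' - k)).carrier ≃o (M (s' - k)).carrier)) :
    LOfd (BLinOrd.of (Σₗ k : ℤ, (M k).carrier)) := by
  lift p to ℕ using hp.le
  lift p' to ℕ using hp'.le
  have hpos := LOfd.sigmaLex_nat (fun k : ℕ => M k) (fun k => hM k) s.toNat (p := p) (by omega)
    fun k hk => by
      obtain ⟨j, hj⟩ : ∃ j : ℕ, s + j = k := ⟨(k - s).toNat, by omega⟩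
      have h1 : s + p + j = ((k + p : ℕ) : ℤ) := by omega
      rw [← hj, ← h1]
      exact hper j
  have hneg := LOfd.sigmaLex_natDual (fun k : ℕ => M (-1 - k)) (fun k => hM _) (-1 - s').toNat
    (p := p') (by omega) fun k hk => by
      obtain ⟨j, hj⟩ : ∃ j : ℕ, s' - j = -1 - k := ⟨(s' + 1 + k).toNat, by omega⟩
      have h1 : s' - p' - j = -1 - ((k + p' : ℕ) : ℤ) := by omega
      rw [← hj, ← h1]
      exact hper' j
  obtain ⟨e⟩ := nonempty_orderIso_sigmaLex_int fun k => (M k).carrier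
  exact (hneg.add hpos).iso ⟨e⟩

section Discrete

variable {α β : Type*} [LinearOrder α] [LinearOrder β]

lemma IsDiscreteLO.orderIso (h : IsDiscreteLO α) (e : α ≃o β) : IsDiscreteLO β := by
  refine ⟨fun b ⟨c, hbc⟩ => ?_, fun b ⟨c, hcb⟩ => ?_⟩
  · obtain ⟨a, ha⟩ := h.1 (e.symm b) ⟨e.symm c, e.symm.strictMono hbc⟩
    exact ⟨e a, by simpa using (apply_covBy_apply_iff e).2 ha⟩
  · obtain ⟨a, ha⟩ := h.2 (e.symm b) ⟨e.symm c, e.symm.strictMono hcb⟩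
    exact ⟨e a, by simpa using (apply_covBy_apply_iff e).2 ha⟩

lemma Sum.Lex.inl_covBy_inl {a b : α} (h : a ⋖ b) :
    (toLex (Sum.inl a) : α ⊕ₗ β) ⋖ toLex (Sum.inl b) := by
  refine ⟨Sum.Lex.inl_lt_inl_iff.2 h.1, ?_⟩
  rintro (c | c) hac hcb
  · exact h.2 (Sum.Lex.inl_lt_inl_iff.1 hac) (Sum.Lex.inl_lt_inl_iff.1 hcb)
  · exact Sum.Lex.not_inr_lt_inl hcb

lemma Sum.Lex.inr_covBy_inr {a b : β} (h : a ⋖ b) :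
    (toLex (Sum.inr a) : α ⊕ₗ β) ⋖ toLex (Sum.inr b) := by
  refine ⟨Sum.Lex.inr_lt_inr_iff.2 h.1, ?_⟩
  rintro (c | c) hac hcb
  · exact Sum.Lex.not_inr_lt_inl hac
  · exact h.2 (Sum.Lex.inr_lt_inr_iff.1 hac) (Sum.Lex.inr_lt_inr_iff.1 hcb)

lemma IsDiscreteLO.sumLex [NoMaxOrder α] [NoMinOrder β] (ha : IsDiscreteLO α)
    (hb : IsDiscreteLO β) : IsDiscreteLO (α ⊕ₗ β) := by
  refine ⟨?_, ?_⟩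
  · rintro (a | b) ⟨c, hc⟩
    · obtain ⟨a', h⟩ := ha.1 a (exists_gt a)
      exact ⟨_, Sum.Lex.inl_covBy_inl h⟩
    · obtain c | c := c
      · exact absurd hc Sum.Lex.not_inr_lt_inl
      · obtain ⟨b', h⟩ := hb.1 b ⟨c, Sum.Lex.inr_lt_inr_iff.1 hc⟩
        exact ⟨_, Sum.Lex.inr_covBy_inr h⟩
  · rintro (a | b) ⟨c, hc⟩
    · obtain c | c := c
      · obtain ⟨a', h⟩ := ha.2 a ⟨c, Sum.Lex.inl_lt_inl_iff.1 hc⟩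
        exact ⟨_, Sum.Lex.inl_covBy_inl h⟩
      · exact absurd hc Sum.Lex.not_inr_lt_inl
    · obtain ⟨b', h⟩ := hb.2 b (exists_lt b)
      exact ⟨_, Sum.Lex.inr_covBy_inr h⟩

variable {ι : Type*} [LinearOrder ι] {M : ι → Type*} [∀ i, LinearOrder (M i)]

lemma Sigma.Lex.mk_covBy_mk_of_covBy {i : ι} {x y : M i} (h : x ⋖ y) :
    (toLex ⟨i, x⟩ : Σₗ i, M i) ⋖ toLex ⟨i, y⟩ := by
  refine ⟨Sigma.Lex.right _ _ h.1, ?_⟩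
  rintro ⟨k, z⟩ (⟨_, _, hik⟩ | ⟨_, _, hxz⟩) hzy
  · rcases hzy with ⟨_, _, hki⟩ | ⟨_, _, -⟩
    exacts [(hik.trans hki).false, hik.false]
  · rcases hzy with ⟨_, _, hii⟩ | ⟨_, _, hzy⟩
    exacts [hii.false, h.2 hxz hzy]

lemma Sigma.Lex.mk_covBy_mk_of_isTop_of_isBot {i j : ι} (hij : i ⋖ j) {x : M i} {y : M j}
    (hx : IsTop x) (hy : IsBot y) : (toLex ⟨i, x⟩ : Σₗ i, M i) ⋖ toLex ⟨j, y⟩ := by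
  refine ⟨Sigma.Lex.left _ _ hij.1, ?_⟩
  rintro ⟨k, z⟩ (⟨_, _, hik⟩ | ⟨_, _, hxz⟩) hzy
  · rcases hzy with ⟨_, _, hkj⟩ | ⟨_, _, hzy⟩
    exacts [hij.2 hik hkj, (hy _).not_gt hzy]
  · exact (hx _).not_gt hxz

lemma IsDiscreteLO.sigmaLex (hM : ∀ i, IsDiscreteLO (M i)) (hmin : ∀ i, NoMinOrder (M i))
    (hmax : ∀ i, NoMaxOrder (M i)) : IsDiscreteLO (Σₗ i, M i) := by
  refine ⟨fun ⟨i, x⟩ _ => ?_, fun ⟨i, x⟩ _ => ?_⟩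
  · obtain ⟨y, h⟩ := (hM i).1 x ((hmax i).exists_gt x)
    exact ⟨_, Sigma.Lex.mk_covBy_mk_of_covBy h⟩
  · obtain ⟨y, h⟩ := (hM i).2 x ((hmin i).exists_lt x)
    exact ⟨_, Sigma.Lex.mk_covBy_mk_of_covBy h⟩

lemma IsDiscreteLO.sigmaLex_of_ordConnected [SuccOrder ι] [PredOrder ι]
    (hM : ∀ i, Nonempty (M i) → IsDiscreteLO (M i) ∧ (∃ x : M i, IsBot x) ∧ ∃ x : M i, IsTop x)
    (hconn : {i | Nonempty (M i)}.OrdConnected) : IsDiscreteLO (Σₗ i, M i) := by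
  refine ⟨fun ⟨i, x⟩ ⟨⟨j, y⟩, hlt⟩ => ?_, fun ⟨i, x⟩ ⟨⟨j, y⟩, hlt⟩ => ?_⟩
  · obtain ⟨hdisc, -, -⟩ := hM i ⟨x⟩
    by_cases hx : IsMax x
    · have hij : i < j := by
        rcases hlt with ⟨_, _, hij⟩ | ⟨_, _, hxy⟩
        exacts [hij, (hx.not_lt hxy).elim]
      have hsucc : Nonempty (M (Order.succ i)) :=
        hconn.out ⟨x⟩ ⟨y⟩ ⟨Order.le_succ i, Order.succ_le_of_lt hij⟩
      obtain ⟨-, ⟨z, hz⟩, -⟩ := hM _ hsucc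
      exact ⟨_, Sigma.Lex.mk_covBy_mk_of_isTop_of_isBot
        (Order.covBy_succ_of_not_isMax (not_isMax_of_lt hij)) hx.isTop hz⟩
    · obtain ⟨z, hxz⟩ := not_isMax_iff.1 hx
      obtain ⟨w, h⟩ := hdisc.1 x ⟨z, hxz⟩
      exact ⟨_, Sigma.Lex.mk_covBy_mk_of_covBy h⟩
  · obtain ⟨hdisc, -, -⟩ := hM i ⟨x⟩
    by_cases hx : IsMin x
    · have hji : j < i := by
        rcases hlt with ⟨_, _, hji⟩ | ⟨_, _, hyx⟩
        exacts [hji, (hx.not_lt hyx).elim]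
      have hpred : Nonempty (M (Order.pred i)) :=
        hconn.out ⟨y⟩ ⟨x⟩ ⟨Order.le_pred_of_lt hji, Order.pred_le i⟩
      obtain ⟨-, -, z, hz⟩ := hM _ hpred
      exact ⟨_, Sigma.Lex.mk_covBy_mk_of_isTop_of_isBot
        (Order.pred_covBy_of_not_isMin (not_isMin_of_lt hji)) hz hx.isBot⟩
    · obtain ⟨z, hzx⟩ := not_isMin_iff.1 hx
      obtain ⟨w, h⟩ := hdisc.2 x ⟨z, hzx⟩
      exact ⟨_, Sigma.Lex.mk_covBy_mk_of_covBy h⟩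

lemma Sigma.Lex.isBot_mk {i : ι} {x : M i} (hx : IsBot x) (hlt : ∀ j < i, IsEmpty (M j)) :
    IsBot (toLex ⟨i, x⟩ : Σₗ i, M i) := by
  rintro ⟨j, y⟩
  rcases lt_trichotomy j i with hji | rfl | hij
  · exact (hlt j hji).elim y
  · exact Sigma.Lex.right _ _ (hx y)
  · exact le_of_lt (Sigma.Lex.left _ _ hij)

lemma Sigma.Lex.isTop_mk {i : ι} {x : M i} (hx : IsTop x) (hgt : ∀ j > i, IsEmpty (M j)) :
    IsTop (toLex ⟨i, x⟩ : Σₗ i, M i) := by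
  rintro ⟨j, y⟩
  rcases lt_trichotomy j i with hji | rfl | hij
  · exact le_of_lt (Sigma.Lex.left _ _ hji)
  · exact Sigma.Lex.right _ _ (hx y)
  · exact (hgt j hij).elim y

lemma Sigma.Lex.noMaxOrder_of_exists_gt (h : ∀ i, Nonempty (M i) → ∃ j > i, Nonempty (M j)) :
    NoMaxOrder (Σₗ i, M i) where
  exists_gt := fun ⟨i, x⟩ => by
    obtain ⟨j, hij, ⟨y⟩⟩ := h i ⟨x⟩
    exact ⟨toLex ⟨j, y⟩, Sigma.Lex.left _ _ hij⟩

lemma Sigma.Lex.noMinOrder_of_exists_lt (h : ∀ i, Nonempty (M i) → ∃ j < i, Nonempty (M j)) :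
    NoMinOrder (Σₗ i, M i) where
  exists_lt := fun ⟨i, x⟩ => by
    obtain ⟨j, hji, ⟨y⟩⟩ := h i ⟨x⟩
    exact ⟨toLex ⟨j, y⟩, Sigma.Lex.left _ _ hji⟩

end Discrete

def dLOfd10 (X : BLinOrd) : Prop :=
  LOfd X ∧ IsDiscreteLO X.carrier ∧ (∃ a : X.carrier, IsBot a) ∧ NoMaxOrder X.carrier

def dLOfd01 (X : BLinOrd) : Prop :=
  LOfd X ∧ IsDiscreteLO X.carrier ∧ NoMinOrder X.carrier ∧ ∃ a : X.carrier, IsTop a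

def dLOfd00 (X : BLinOrd) : Prop :=
  LOfd X ∧ IsDiscreteLO X.carrier ∧ NoMinOrder X.carrier ∧ NoMaxOrder X.carrier

lemma dLOfd11.nonempty {X : BLinOrd} (h : dLOfd11 X) : Nonempty X.carrier :=
  let ⟨a, _⟩ := h.2.2.1; ⟨a⟩

lemma lOfd_and_isDiscreteLO_sigmaLex_int (M : ℤ → BLinOrd)
    (hM : ∀ k, Nonempty (M k).carrier → dLOfd11 (M k))
    (hconn : {k | Nonempty (M k).carrier}.OrdConnected) {s p s' p' : ℤ} (hp : 0 < p)
    (hper : ∀ k : ℕ, Nonempty ((M (s + p + k)).carrier ≃o (M (s + k)).carrier)) (hp' : 0 < p')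
    (hper' : ∀ k : ℕ, Nonempty ((M (s' - p' - k)).carrier ≃o (M (s' - k)).carrier)) :
    LOfd (BLinOrd.of (Σₗ k : ℤ, (M k).carrier)) ∧ IsDiscreteLO (Σₗ k : ℤ, (M k).carrier) := by
  refine ⟨LOfd.sigmaLex_int M (fun k => ?_) hp hper hp' hper',
    IsDiscreteLO.sigmaLex_of_ordConnected (fun k hk => (hM k hk).2) hconn⟩
  rcases isEmpty_or_nonempty (M k).carrier with h | h
  exacts [LOfd.of_isEmpty h, (hM k h).1]

lemma dLOfd00_sigmaLex_int (M : ℤ → BLinOrd) (hM : ∀ k, dLOfd11 (M k)) {s p s' p' : ℤ}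
    (hp : 0 < p) (hper : ∀ k : ℕ, Nonempty ((M (s + p + k)).carrier ≃o (M (s + k)).carrier))
    (hp' : 0 < p')
    (hper' : ∀ k : ℕ, Nonempty ((M (s' - p' - k)).carrier ≃o (M (s' - k)).carrier)) :
    dLOfd00 (BLinOrd.of (Σₗ k : ℤ, (M k).carrier)) := by
  have hne k : Nonempty (M k).carrier := (hM k).nonempty
  have hconn : {k | Nonempty (M k).carrier}.OrdConnected := by
    rw [Set.eq_univ_of_forall hne]
    exact Set.ordConnected_univ
  obtain ⟨hfd, hdisc⟩ :=
    lOfd_and_isDiscreteLO_sigmaLex_int M (fun k _ => hM k) hconn hp hper hp' hper'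
  exact ⟨hfd, hdisc, Sigma.Lex.noMinOrder_of_exists_lt fun k _ => ⟨k - 1, by omega, hne _⟩,
    Sigma.Lex.noMaxOrder_of_exists_gt fun k _ => ⟨k + 1, by omega, hne _⟩⟩

lemma dLOfd10_sigmaLex_int (M : ℤ → BLinOrd) (hcls : ∀ k : ℤ, 0 ≤ k → dLOfd11 (M k))
    (hemp : ∀ k : ℤ, k < 0 → IsEmpty (M k).carrier) {s p : ℤ} (hp : 0 < p)
    (hper : ∀ k : ℕ, Nonempty ((M (s + p + k)).carrier ≃o (M (s + k)).carrier)) :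
    dLOfd10 (BLinOrd.of (Σₗ k : ℤ, (M k).carrier)) := by
  have hne k : Nonempty (M k).carrier ↔ 0 ≤ k :=
    ⟨fun ⟨x⟩ => not_lt.1 fun hk => (hemp k hk).elim x, fun hk => (hcls k hk).nonempty⟩
  have hconn : {k | Nonempty (M k).carrier}.OrdConnected := by
    rw [show {k | Nonempty (M k).carrier} = Set.Ici 0 from Set.ext hne]
    exact Set.ordConnected_Ici
  have hper' (k : ℕ) : Nonempty ((M (-1 - 1 - k)).carrier ≃o (M (-1 - k)).carrier) :=
    ⟨@OrderIso.ofIsEmpty _ _ _ _ (hemp _ (by omega)) (hemp _ (by omega))⟩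
  obtain ⟨hfd, hdisc⟩ := lOfd_and_isDiscreteLO_sigmaLex_int M
    (fun k hk => hcls k ((hne k).1 hk)) hconn hp hper one_pos hper'
  obtain ⟨-, -, ⟨a, ha⟩, -⟩ := hcls 0 le_rfl
  exact ⟨hfd, hdisc, ⟨_, Sigma.Lex.isBot_mk ha hemp⟩,
    Sigma.Lex.noMaxOrder_of_exists_gt fun k hk =>
      ⟨k + 1, by omega, (hne _).2 (by have := (hne k).1 hk; omega)⟩⟩

lemma dLOfd01_sigmaLex_int (M : ℤ → BLinOrd) (hcls : ∀ k : ℤ, k ≤ 0 → dLOfd11 (M k))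
    (hemp : ∀ k : ℤ, 0 < k → IsEmpty (M k).carrier) {s' p' : ℤ} (hp' : 0 < p')
    (hper' : ∀ k : ℕ, Nonempty ((M (s' - p' - k)).carrier ≃o (M (s' - k)).carrier)) :
    dLOfd01 (BLinOrd.of (Σₗ k : ℤ, (M k).carrier)) := by
  have hne k : Nonempty (M k).carrier ↔ k ≤ 0 :=
    ⟨fun ⟨x⟩ => not_lt.1 fun hk => (hemp k hk).elim x, fun hk => (hcls k hk).nonempty⟩
  have hconn : {k | Nonempty (M k).carrier}.OrdConnected := by
    rw [show {k | Nonempty (M k).carrier} = Set.Iic 0 from Set.ext hne]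
    exact Set.ordConnected_Iic
  have hper (k : ℕ) : Nonempty ((M (1 + 1 + k)).carrier ≃o (M (1 + k)).carrier) :=
    ⟨@OrderIso.ofIsEmpty _ _ _ _ (hemp _ (by omega)) (hemp _ (by omega))⟩
  obtain ⟨hfd, hdisc⟩ := lOfd_and_isDiscreteLO_sigmaLex_int M
    (fun k hk => hcls k ((hne k).1 hk)) hconn one_pos hper hp' hper'
  obtain ⟨-, -, -, a, ha⟩ := hcls 0 le_rfl
  exact ⟨hfd, hdisc, Sigma.Lex.noMinOrder_of_exists_lt fun k hk =>
      ⟨k - 1, by omega, (hne _).2 (by have := (hne k).1 hk; omega)⟩,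
    ⟨_, Sigma.Lex.isTop_mk ha hemp⟩⟩

lemma IsShuffleOf.dLOfd00 {S : BLinOrd} {n : ℕ} {N : Fin n → BLinOrd} (hS : IsShuffleOf S N)
    (hN : ∀ j, dLOfd00 (N j)) : dLOfd00 S := by
  rcases hS with ⟨-, hemp⟩ | ⟨f, hf, ⟨e⟩⟩
  · exact ⟨LOfd.of_isEmpty hemp, ⟨fun a => hemp.elim a, fun a => hemp.elim a⟩,
      ⟨fun a => hemp.elim a⟩, ⟨fun a => hemp.elim a⟩⟩
  have hmin q : NoMinOrder (N (f q)).carrier := (hN (f q)).2.2.1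
  have hmax q : NoMaxOrder (N (f q)).carrier := (hN (f q)).2.2.2
  refine ⟨(LOfd.shuffle N f (fun j => (hN j).1) hf).iso ⟨e.symm⟩,
    (IsDiscreteLO.sigmaLex (fun q => (hN (f q)).2.1) hmin hmax).orderIso e.symm,
    ⟨fun a => ?_⟩, ⟨fun a => ?_⟩⟩
  · obtain ⟨b, hb⟩ := exists_lt (e a)
    exact ⟨e.symm b, e.symm_apply_lt.2 hb⟩
  · obtain ⟨b, hb⟩ := exists_gt (e a)
    exact ⟨e.symm b, e.lt_symm_apply.2 hb⟩

lemma dLOfd11_sumLex {A S B : BLinOrd} (hA : dLOfd10 A) (hS : dLOfd00 S) (hB : dLOfd01 B) :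
    dLOfd11 (BLinOrd.of (A.carrier ⊕ₗ (S.carrier ⊕ₗ B.carrier))) := by
  obtain ⟨hAfd, hAdisc, ⟨a, ha⟩, _⟩ := hA
  obtain ⟨hSfd, hSdisc, _, _⟩ := hS
  obtain ⟨hBfd, hBdisc, _, b, hb⟩ := hB
  refine ⟨hAfd.add (hSfd.add hBfd), hAdisc.sumLex (hSdisc.sumLex hBdisc),
    ⟨toLex (Sum.inl a), ?_⟩, ⟨toLex (Sum.inr (toLex (Sum.inr b))), ?_⟩⟩
  · rintro (x | x)
    exacts [Sum.Lex.inl_le_inl_iff.2 (ha x), Sum.Lex.inl_le_inr _ _]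
  · rintro (x | x | x)
    exacts [Sum.Lex.inl_le_inr _ _, Sum.Lex.inr_le_inr_iff.2 (Sum.Lex.inl_le_inr _ _),
      Sum.Lex.inr_le_inr_iff.2 (Sum.Lex.inr_le_inr_iff.2 (hb x))]

/-- recursive reconstruction lemma. -/
theorem recursive_reconstruction (n : ℕ) (L : Fin (n + 2) → ℤ → BLinOrd)
    (h0cls : ∀ k : ℤ, 0 ≤ k → dLOfd11 (L 0 k))
    (h0emp : ∀ k : ℤ, k < 0 → IsEmpty (L 0 k).carrier)
    (hlastcls : ∀ k : ℤ, k ≤ 0 → dLOfd11 (L (Fin.last (n + 1)) k))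
    (hlastemp : ∀ k : ℤ, 0 < k → IsEmpty (L (Fin.last (n + 1)) k).carrier)
    (hmidcls : ∀ j : Fin (n + 2), j ≠ 0 → j ≠ Fin.last (n + 1) → ∀ k : ℤ, dLOfd11 (L j k))
    (hper : ∀ j : Fin (n + 2), j ≠ Fin.last (n + 1) →
      ∃ s : ℤ, 0 ≤ s ∧ ∃ p : ℤ, 0 < p ∧
        ∀ k : ℕ, Nonempty ((L j (s + p + k)).carrier ≃o (L j (s + k)).carrier))
    (hper' : ∀ j : Fin (n + 2), j ≠ 0 →
      ∃ s : ℤ, s ≤ 0 ∧ ∃ p : ℤ, 0 < p ∧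
        ∀ k : ℕ, Nonempty ((L j (s - p - k)).carrier ≃o (L j (s - k)).carrier))
    (S : BLinOrd)
    (hS : IsShuffleOf S
      (fun j : Fin n => BLinOrd.of (Σₗ k : ℤ, (L j.succ.castSucc k).carrier))) :
    dLOfd11 (BLinOrd.of ((Σₗ k : ℤ, (L 0 k).carrier) ⊕ₗ
      (S.carrier ⊕ₗ (Σₗ k : ℤ, (L (Fin.last (n + 1)) k).carrier)))) := by
  have h0 : (0 : Fin (n + 2)) ≠ Fin.last (n + 1) := Fin.last_pos.ne
  obtain ⟨_, -, p, hp, hperA⟩ := hper 0 h0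
  obtain ⟨_, -, p', hp', hperB⟩ := hper' _ h0.symm
  refine dLOfd11_sumLex (dLOfd10_sigmaLex_int _ h0cls h0emp hp hperA) (hS.dLOfd00 fun j => ?_)
    (dLOfd01_sigmaLex_int _ hlastcls hlastemp hp' hperB)
  have hj0 : j.succ.castSucc ≠ 0 := Fin.castSucc_ne_zero_iff.2 j.succ_ne_zero
  have hjl : j.succ.castSucc ≠ Fin.last (n + 1) := (Fin.castSucc_lt_last _).ne
  obtain ⟨_, -, p, hp, hperj⟩ := hper _ hjl
  obtain ⟨_, -, p', hp', hperj'⟩ := hper' _ hj0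
  exact dLOfd00_sigmaLex_int _ (hmidcls _ hj0 hjl) hp hperj hp' hperj'
end

section
/- Let n ≥ 1 and let L₁,…,L_n be nonempty linear orders, with a fixed partition {D₁,…,D_n} of ℚ into subsets each dense in ℚ, and Ξ(L₁,…,L_n) = Σ_{q∈ℚ} L'_q the corresponding shuffle. Then every gap (X,Y) of Ξ(L₁,…,L_n) is of one of the following four types: (G1) X = Σ_{q∈ℚ, q<r₀} L'_q and Y = Σ_{q∈ℚ, q>r₀} L'_q for some irrational real r₀; (G2) X = Σ_{q∈ℚ, q<r₀} L'_q and Y = Σ_{q∈ℚ, q≥r₀} L'_q for some r₀ ∈ D_j with L_j having no minimum; (G3) X = Σ_{q∈ℚ, q≤r₀} L'_q and Y = Σ_{q∈ℚ, q>r₀} L'_q for some r₀ ∈ D_j with L_j having no maximum; (G4) X = Σ_{q∈ℚ, q<r₀} L'_q + L_j¹ and Y = L_j² + Σ_{q∈ℚ, q>r₀} L'_q for some r₀ ∈ D_j and some gap (L_j¹, L_j²) of the copy L'_{r₀} of L_j. -/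
/-- A Dedekind cut of a linear order: a pair `(X, Y)` of nonempty subsets covering the
order with every element of `X` below every element of `Y`. -/
def IsCut {α : Type*} [LinearOrder α] (X Y : Set α) : Prop :=
  X.Nonempty ∧ Y.Nonempty ∧ X ∪ Y = Set.univ ∧ ∀ x ∈ X, ∀ y ∈ Y, x < y

/-- A gap of a linear order: a Dedekind cut whose left part has no maximum and whose
right part has no minimum. -/
def IsGap {α : Type*} [LinearOrder α] (X Y : Set α) : Prop :=
  IsCut X Y ∧ (∀ x ∈ X, ∃ x' ∈ X, x < x') ∧ (∀ y ∈ Y, ∃ y' ∈ Y, y' < y)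

/-!
A gap `(X, Y)` of `Σₗ q : ℚ, L (f q)` either splits a single summand `L (f r₀)`, and is then
a gap of that summand (G4), or is a union of whole summands. In the second case the indices
of the summands in `X` and in `Y` form a Dedekind cut of `ℚ`: if the left part has a maximum
`r₀`, the summand at `r₀` has no maximum because `X` has none (G3); dually if the right part
has a minimum (G2); otherwise it is a gap of `ℚ`, which is cut out by an irrational real (G1).
-/

open Set

namespace IsCut

variable {α : Type*} [LinearOrder α] {X Y : Set α} {x y : α}

theorem lt (h : IsCut X Y) (hx : x ∈ X) (hy : y ∈ Y) : x < y := h.2.2.2 x hx y hy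

theorem mem_right_iff (h : IsCut X Y) : x ∈ Y ↔ x ∉ X := by
  refine ⟨fun hy hx => (h.lt hx hy).false, fun hx => ?_⟩
  have : x ∈ X ∪ Y := h.2.2.1 ▸ mem_univ x
  exact this.resolve_left hx

theorem mem_left_of_le (h : IsCut X Y) (hx : x ∈ X) (hyx : y ≤ x) : y ∈ X := by
  by_contra hy
  exact (h.lt hx (h.mem_right_iff.2 hy)).not_ge hyx

theorem mem_right_of_le (h : IsCut X Y) (hx : x ∈ Y) (hxy : x ≤ y) : y ∈ Y :=
  h.mem_right_iff.2 fun hy => (h.lt hy hx).not_ge hxy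

theorem left_eq_Iic (h : IsCut X Y) {i : α} (hi : IsGreatest X i) : X = Iic i :=
  Subset.antisymm hi.2 fun _ hj => h.mem_left_of_le hi.1 hj

theorem right_eq_Ioi (h : IsCut X Y) {i : α} (hi : IsGreatest X i) : Y = Ioi i := by
  ext j
  rw [h.mem_right_iff, h.left_eq_Iic hi, mem_Iic, mem_Ioi, not_le]

theorem right_eq_Ici (h : IsCut X Y) {i : α} (hi : IsLeast Y i) : Y = Ici i :=
  Subset.antisymm hi.2 fun _ hj => h.mem_right_of_le hi.1 hj

theorem left_eq_Iio (h : IsCut X Y) {i : α} (hi : IsLeast Y i) : X = Iio i := by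
  ext j
  rw [← not_iff_not, ← h.mem_right_iff, h.right_eq_Ici hi, mem_Ici, mem_Iio, not_lt]

theorem isGreatest_or_isLeast_or_isGap (h : IsCut X Y) :
    (∃ i, IsGreatest X i) ∨ (∃ i, IsLeast Y i) ∨ IsGap X Y := by
  by_contra! hne
  obtain ⟨hmax, hmin, hgap⟩ := hne
  refine hgap ⟨h, fun x hx => ?_, fun y hy => ?_⟩
  · by_contra! hx'
    exact hmax x ⟨hx, hx'⟩
  · by_contra! hy'
    exact hmin y ⟨hy, hy'⟩

end IsCut

theorem IsGap.exists_irrational {Q R : Set ℚ} (h : IsGap Q R) :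
    ∃ r : ℝ, Irrational r ∧ Q = {q : ℚ | (q : ℝ) < r} ∧ R = {q : ℚ | r < (q : ℝ)} := by
  obtain ⟨hcut, hnomax, hnomin⟩ := h
  have hQR : ∀ q ∈ Q, ∀ p ∈ R, (q : ℝ) < p := fun q hq p hp => Rat.cast_lt.2 (hcut.lt hq hp)
  obtain ⟨p₀, hp₀⟩ := hcut.2.1
  have hbdd : BddAbove (((↑) : ℚ → ℝ) '' Q) :=
    ⟨p₀, forall_mem_image.2 fun q hq => (hQR q hq p₀ hp₀).le⟩
  set r := sSup (((↑) : ℚ → ℝ) '' Q)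
  have hQ : ∀ q ∈ Q, (q : ℝ) < r := fun q hq => by
    obtain ⟨q', hq', hqq'⟩ := hnomax q hq
    exact (Rat.cast_lt.2 hqq').trans_le (le_csSup hbdd (mem_image_of_mem _ hq'))
  have hR : ∀ p ∈ R, r < (p : ℝ) := fun p hp => by
    obtain ⟨p', hp', hpp'⟩ := hnomin p hp
    exact (csSup_le (hcut.1.image _) (forall_mem_image.2 fun q hq => (hQR q hq p' hp').le)).trans_lt
      (Rat.cast_lt.2 hpp')
  refine ⟨r, ?_, Set.ext fun q => ⟨hQ q, fun hq => by_contra fun hq' =>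
      (hR q (hcut.mem_right_iff.2 hq')).not_gt hq⟩,
    Set.ext fun q => ⟨hR q, fun hq => hcut.mem_right_iff.2 fun hqQ => (hQ q hqQ).asymm hq⟩⟩
  rintro ⟨q, hq⟩
  by_cases hqQ : q ∈ Q
  · exact (hQ q hqQ).ne hq
  · exact (hR q (hcut.mem_right_iff.2 hqQ)).ne' hq

namespace Sigma.Lex

variable {ι : Type*} [LinearOrder ι] {β : ι → Type*} [∀ i, LinearOrder (β i)]

theorem lt_of_fst_lt {s t : Σₗ i, β i} (h : (ofLex s).1 < (ofLex t).1) : s < t :=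
  lt_def.2 (Or.inl h)

theorem toLex_mk_lt_toLex_mk {i : ι} {a b : β i} :
    toLex (⟨i, a⟩ : Σ i, β i) < toLex ⟨i, b⟩ ↔ a < b :=
  ⟨fun h => by
    cases h with
    | left _ _ h => exact absurd h (lt_irrefl i)
    | right _ _ h => exact h,
   fun h => Sigma.Lex.right _ _ h⟩

theorem monotone_fst : Monotone fun t : Σₗ i, β i => (ofLex t).1 :=
  fun _ _ h => not_lt.1 fun h' => (lt_of_fst_lt h').not_ge h

theorem exists_eq_toLex_of_lt_of_fst_le {i : ι} {a : β i} {t : Σₗ i, β i}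
    (h : toLex ⟨i, a⟩ < t) (ht : (ofLex t).1 ≤ i) : ∃ a', t = toLex ⟨i, a'⟩ ∧ a < a' := by
  obtain ⟨j, c⟩ := t
  cases h with
  | left _ _ hij => exact absurd ht (not_le.2 hij)
  | right _ c hac => exact ⟨c, rfl, hac⟩

theorem exists_eq_toLex_of_lt_of_le_fst {i : ι} {b : β i} {t : Σₗ i, β i}
    (h : t < toLex ⟨i, b⟩) (ht : i ≤ (ofLex t).1) : ∃ b', t = toLex ⟨i, b'⟩ ∧ b' < b := by
  obtain ⟨j, c⟩ := t
  cases h with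
  | left _ _ hji => exact absurd ht (not_le.2 hji)
  | right c _ hcb => exact ⟨c, rfl, hcb⟩

variable {X Y : Set (Σₗ i, β i)} {i : ι}

theorem exists_gt_of_noMax_of_fst_le (hX : ∀ x ∈ X, ∃ x' ∈ X, x < x')
    (hle : ∀ x ∈ X, (ofLex x).1 ≤ i) {a : β i} (ha : toLex ⟨i, a⟩ ∈ X) :
    ∃ a', toLex ⟨i, a'⟩ ∈ X ∧ a < a' := by
  obtain ⟨x', hx', hax'⟩ := hX _ ha
  obtain ⟨a', rfl, haa'⟩ := exists_eq_toLex_of_lt_of_fst_le hax' (hle x' hx')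
  exact ⟨a', hx', haa'⟩

theorem exists_lt_of_noMin_of_le_fst (hY : ∀ y ∈ Y, ∃ y' ∈ Y, y' < y)
    (hle : ∀ y ∈ Y, i ≤ (ofLex y).1) {b : β i} (hb : toLex ⟨i, b⟩ ∈ Y) :
    ∃ b', toLex ⟨i, b'⟩ ∈ Y ∧ b' < b := by
  obtain ⟨y', hy', hy'b⟩ := hY _ hb
  obtain ⟨b', rfl, hb'b⟩ := exists_eq_toLex_of_lt_of_le_fst hy'b (hle y' hy')
  exact ⟨b', hy', hb'b⟩

section Split

variable {a b : β i}

theorem _root_.IsCut.left_eq_of_split (h : IsCut X Y) (ha : toLex ⟨i, a⟩ ∈ X)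
    (hb : toLex ⟨i, b⟩ ∈ Y) :
    X = {t | (ofLex t).1 < i} ∪ {t | ∃ a ∈ {a | toLex ⟨i, a⟩ ∈ X}, t = toLex ⟨i, a⟩} := by
  ext t
  refine ⟨fun ht => ?_, ?_⟩
  · obtain ⟨j, c⟩ := t
    rcases (monotone_fst (h.lt ht hb).le).lt_or_eq with hji | rfl
    · exact Or.inl hji
    · exact Or.inr ⟨c, ht, rfl⟩
  · rintro (hji | ⟨c, hc, rfl⟩)
    · exact h.mem_left_of_le ha (lt_of_fst_lt hji).le
    · exact hc

theorem _root_.IsCut.right_eq_of_split (h : IsCut X Y) (ha : toLex ⟨i, a⟩ ∈ X)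
    (hb : toLex ⟨i, b⟩ ∈ Y) :
    Y = {t | i < (ofLex t).1} ∪ {t | ∃ b ∈ {b | toLex ⟨i, b⟩ ∈ Y}, t = toLex ⟨i, b⟩} := by
  ext t
  refine ⟨fun ht => ?_, ?_⟩
  · obtain ⟨j, c⟩ := t
    rcases (monotone_fst (h.lt ha ht).le).lt_or_eq with hij | rfl
    · exact Or.inl hij
    · exact Or.inr ⟨c, ht, rfl⟩
  · rintro (hij | ⟨c, hc, rfl⟩)
    · exact h.mem_right_of_le hb (lt_of_fst_lt hij).le
    · exact hc

theorem _root_.IsGap.fiber_isGap_of_split (h : IsGap X Y) (ha : toLex ⟨i, a⟩ ∈ X)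
    (hb : toLex ⟨i, b⟩ ∈ Y) : IsGap {a | toLex ⟨i, a⟩ ∈ X} {b | toLex ⟨i, b⟩ ∈ Y} := by
  obtain ⟨hcut, hnomax, hnomin⟩ := h
  refine ⟨⟨⟨a, ha⟩, ⟨b, hb⟩, ?_, fun a ha b hb => ?_⟩, fun a ha => ?_, fun b hb => ?_⟩
  · exact eq_univ_of_forall fun c => (em _).imp_right hcut.mem_right_iff.2
  · exact toLex_mk_lt_toLex_mk.1 (hcut.lt ha hb)
  · exact exists_gt_of_noMax_of_fst_le hnomax (fun x hx => monotone_fst (hcut.lt hx hb).le) ha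
  · exact exists_lt_of_noMin_of_le_fst hnomin (fun y hy => monotone_fst (hcut.lt ha hy).le) hb

end Split

theorem _root_.IsGap.exists_gt_of_eq_fst_le (h : IsGap X Y) (hX : X = {t | (ofLex t).1 ≤ i})
    (a : β i) : ∃ b, a < b := by
  obtain ⟨b, -, hab⟩ := exists_gt_of_noMax_of_fst_le h.2.1 (fun x hx => hX.subset hx)
    (by rw [hX]; exact le_rfl : toLex ⟨i, a⟩ ∈ X)
  exact ⟨b, hab⟩

theorem _root_.IsGap.exists_lt_of_eq_le_fst (h : IsGap X Y) (hY : Y = {t | i ≤ (ofLex t).1})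
    (b : β i) : ∃ a, a < b := by
  obtain ⟨a, -, hab⟩ := exists_lt_of_noMin_of_le_fst h.2.2 (fun y hy => hY.subset hy)
    (by rw [hY]; exact le_rfl : toLex ⟨i, b⟩ ∈ Y)
  exact ⟨a, hab⟩

theorem _root_.IsCut.eq_preimage_image_fst_left (h : IsCut X Y)
    (hsplit : ∀ s ∈ X, ∀ t ∈ Y, (ofLex s).1 ≠ (ofLex t).1) :
    X = (Sigma.fst ∘ ofLex) ⁻¹' ((Sigma.fst ∘ ofLex) '' X) :=
  (subset_preimage_image _ _).antisymm fun t ⟨s, hs, hst⟩ =>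
    by_contra fun ht => hsplit s hs t (h.mem_right_iff.2 ht) hst

theorem _root_.IsCut.eq_preimage_image_fst_right (h : IsCut X Y)
    (hsplit : ∀ s ∈ X, ∀ t ∈ Y, (ofLex s).1 ≠ (ofLex t).1) :
    Y = (Sigma.fst ∘ ofLex) ⁻¹' ((Sigma.fst ∘ ofLex) '' Y) :=
  (subset_preimage_image _ _).antisymm fun t ⟨s, hs, hst⟩ =>
    h.mem_right_iff.2 fun ht => hsplit t ht s hs hst.symm

theorem _root_.IsCut.image_fst [∀ i, Nonempty (β i)] (h : IsCut X Y)
    (hsplit : ∀ s ∈ X, ∀ t ∈ Y, (ofLex s).1 ≠ (ofLex t).1) :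
    IsCut ((Sigma.fst ∘ ofLex) '' X) ((Sigma.fst ∘ ofLex) '' Y) := by
  refine ⟨h.1.image _, h.2.1.image _, eq_univ_of_forall fun i => ?_, ?_⟩
  · obtain ⟨b⟩ : Nonempty (β i) := inferInstance
    by_cases hb : toLex ⟨i, b⟩ ∈ X
    · exact Or.inl ⟨_, hb, rfl⟩
    · exact Or.inr ⟨_, h.mem_right_iff.2 hb, rfl⟩
  · rintro _ ⟨s, hs, rfl⟩ _ ⟨t, ht, rfl⟩
    exact (monotone_fst (h.lt hs ht).le).lt_of_ne (hsplit s hs t ht)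

end Sigma.Lex

theorem shuffle_gaps_classification_general {n : ℕ} (L : Fin n → Type)
    [∀ i, LinearOrder (L i)] [∀ i, Nonempty (L i)]
    (f : ℚ → Fin n)
    (X Y : Set (Σₗ q : ℚ, L (f q))) (hXY : IsGap X Y) :
    (∃ r₀ : ℝ, Irrational r₀ ∧
      X = {t | ((ofLex t).1 : ℝ) < r₀} ∧ Y = {t | r₀ < ((ofLex t).1 : ℝ)}) ∨
    (∃ r₀ : ℚ, (∀ a : L (f r₀), ∃ b, b < a) ∧
      X = {t | (ofLex t).1 < r₀} ∧ Y = {t | r₀ ≤ (ofLex t).1}) ∨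
    (∃ r₀ : ℚ, (∀ a : L (f r₀), ∃ b, a < b) ∧
      X = {t | (ofLex t).1 ≤ r₀} ∧ Y = {t | r₀ < (ofLex t).1}) ∨
    (∃ r₀ : ℚ, ∃ A B : Set (L (f r₀)), IsGap A B ∧
      X = {t | (ofLex t).1 < r₀} ∪ {t | ∃ a ∈ A, t = toLex ⟨r₀, a⟩} ∧
      Y = {t | r₀ < (ofLex t).1} ∪ {t | ∃ b ∈ B, t = toLex ⟨r₀, b⟩}) := by
  by_cases hsplit : ∃ s ∈ X, ∃ t ∈ Y, (ofLex s).1 = (ofLex t).1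
  · obtain ⟨⟨r, a⟩, ha, ⟨r', b⟩, hb, hrr'⟩ := hsplit
    obtain rfl : r = r' := hrr'
    exact .inr <| .inr <| .inr ⟨r, _, _, hXY.fiber_isGap_of_split ha hb,
      hXY.1.left_eq_of_split ha hb, hXY.1.right_eq_of_split ha hb⟩
  push Not at hsplit
  have hX := hXY.1.eq_preimage_image_fst_left hsplit
  have hY := hXY.1.eq_preimage_image_fst_right hsplit
  have hcut := hXY.1.image_fst hsplit
  rcases hcut.isGreatest_or_isLeast_or_isGap with ⟨r, hr⟩ | ⟨r, hr⟩ | hgap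
  · have hXr : X = {t | (ofLex t).1 ≤ r} := hX.trans (by rw [hcut.left_eq_Iic hr]; rfl)
    exact .inr <| .inr <| .inl ⟨r, hXY.exists_gt_of_eq_fst_le hXr, hXr,
      hY.trans (by rw [hcut.right_eq_Ioi hr]; rfl)⟩
  · have hYr : Y = {t | r ≤ (ofLex t).1} := hY.trans (by rw [hcut.right_eq_Ici hr]; rfl)
    exact .inr <| .inl ⟨r, hXY.exists_lt_of_eq_le_fst hYr,
      hX.trans (by rw [hcut.left_eq_Iio hr]; rfl), hYr⟩
  · obtain ⟨r, hr, hQ, hR⟩ := hgap.exists_irrational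
    exact .inl ⟨r, hr, hX.trans (by rw [hQ]; rfl), hY.trans (by rw [hR]; rfl)⟩

/-- every gap of the shuffle `Ξ(L₁,…,Lₙ) = Σ_{q ∈ ℚ} L (f q)` is of one of
the four types G1–G4. -/
theorem shuffle_gaps_classification {n : ℕ} (hn : 1 ≤ n) (L : Fin n → Type)
    [∀ i, LinearOrder (L i)] [∀ i, Nonempty (L i)]
    (f : ℚ → Fin n) (hf : ∀ i : Fin n, DenseQ (f ⁻¹' {i}))
    (X Y : Set (Σₗ q : ℚ, L (f q))) (hXY : IsGap X Y) :
    (∃ r₀ : ℝ, Irrational r₀ ∧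
      X = {t | ((ofLex t).1 : ℝ) < r₀} ∧ Y = {t | r₀ < ((ofLex t).1 : ℝ)}) ∨
    (∃ r₀ : ℚ, (∀ a : L (f r₀), ∃ b, b < a) ∧
      X = {t | (ofLex t).1 < r₀} ∧ Y = {t | r₀ ≤ (ofLex t).1}) ∨
    (∃ r₀ : ℚ, (∀ a : L (f r₀), ∃ b, a < b) ∧
      X = {t | (ofLex t).1 ≤ r₀} ∧ Y = {t | r₀ < (ofLex t).1}) ∨
    (∃ r₀ : ℚ, ∃ A B : Set (L (f r₀)), IsGap A B ∧
      X = {t | (ofLex t).1 < r₀} ∪ {t | ∃ a ∈ A, t = toLex ⟨r₀, a⟩} ∧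
      Y = {t | r₀ < (ofLex t).1} ∪ {t | ∃ b ∈ B, t = toLex ⟨r₀, b⟩}) :=
  shuffle_gaps_classification_general L f X Y hXY
end

section
/- Let n ≥ 1 and let L₁,…,L_n be nonempty linear orders, with a fixed partition {D₁,…,D_n} of ℚ into subsets each dense in ℚ (regarded as subsets of ℝ). Then the completion of the shuffle satisfies 𝒞(Ξ(L₁,…,L_n)) ≅ Σ_{r∈ℝ} T_r, where T_r := 𝟏 ∔ 𝒞(L_j) ∔ 𝟏 whenever r ∈ D_j for some j ∈ {1,…,n}, and T_r := 𝟏 whenever r is irrational. -/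
/-- A linear order is (Dedekind) complete if every nonempty subset bounded above has a
least upper bound. -/
def IsCompleteLO (α : Type*) [LinearOrder α] : Prop :=
  ∀ s : Set α, s.Nonempty → BddAbove s → ∃ a, IsLUB s a

/-- `e : α ↪o β` exhibits `β` as a completion of `α`: `β` is complete and no proper
suborder of `β` containing (the image of) `α` is complete. -/
def IsCompletion {α β : Type*} [LinearOrder α] [LinearOrder β] (e : α ↪o β) : Prop :=
  IsCompleteLO β ∧ ∀ S : Set β, Set.range e ⊆ S → IsCompleteLO S → S = Set.univ

/-- The order `L₁ ∔ L₂` obtained from `L₁ + L₂` by identifying the maximum element of `L₁`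
with the minimum element of `L₂` when both exist (realized, up to canonical isomorphism,
by deleting the minimum of `L₂` exactly when `L₁` has a maximum and `L₂` has a minimum),
and equal to `L₁ + L₂` otherwise. -/
abbrev dotSum (α β : Type*) [LinearOrder α] [LinearOrder β] :=
  α ⊕ₗ {y : β // ¬((∃ a : α, ∀ x, x ≤ a) ∧ (∀ z, y ≤ z))}

/-!
Every point of the completion `β` of `α` is approximated from both sides by `α`: the range of
`e : α ↪o β` is coinitial and cofinal and meets every interval `(b, b']` and `[b, b')`, since
otherwise deleting a suitable interval from `β` would leave a smaller complete suborder containing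
the range. Two complete extensions of `α` with this property are isomorphic, both being isomorphic
to the same family of cuts `e ⁻¹' Iic b` of `α`.

It therefore suffices to embed `Σ_{q ∈ ℚ} L_{f q}` into `Σ_{r ∈ ℝ} T_r`, mapping the summand at `q`
into the copy of `𝒞(L_{f q})` inside `T_q ≅ 𝟏 ∔ 𝒞(L_{f q}) ∔ 𝟏`. The sum is complete because `ℝ`
is and every `T_r` is complete with both endpoints. It is approximated from both sides by the
image: across columns because `ℚ` is dense in `ℝ`, and within a column because the irrational
columns are points, `𝒞(L_j)` is approximated by `L_j`, and an endpoint added in `T_q` is a limit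
of `𝒞(L_j)`.
-/

open Set

section Completion

variable {α β γ : Type*} [LinearOrder α] [LinearOrder β] [LinearOrder γ]

def IsIntervalDense (e : α ↪o β) : Prop :=
  ∀ ⦃b b' : β⦄, b < b' → (∃ a, e a ∈ Ioc b b') ∧ ∃ a, e a ∈ Ico b b'

structure IsDenseExtension (e : α ↪o β) : Prop where
  exists_le : ∀ b, ∃ a, e a ≤ b
  exists_ge : ∀ b, ∃ a, b ≤ e a
  isIntervalDense : IsIntervalDense e

lemma IsIntervalDense.trans {e : α ↪o β} {j : β ↪o γ} (he : IsIntervalDense e)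
    (hj : IsIntervalDense j) : IsIntervalDense (e.trans j) := by
  intro c c' hcc'
  constructor
  · obtain ⟨b₁, hcb₁, hb₁c'⟩ := (hj hcc').1
    obtain ⟨b₀, hcb₀, hb₀b₁⟩ := (hj hcb₁).2
    obtain ⟨a, hb₀a, hab₁⟩ := (he (j.lt_iff_lt.1 hb₀b₁)).1
    exact ⟨a, hcb₀.trans_lt (j.lt_iff_lt.2 hb₀a), (j.le_iff_le.2 hab₁).trans hb₁c'⟩
  · obtain ⟨b₀, hcb₀, hb₀c'⟩ := (hj hcc').2
    obtain ⟨b₁, hb₀b₁, hb₁c'⟩ := (hj hb₀c').1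
    obtain ⟨a, hb₀a, hab₁⟩ := (he (j.lt_iff_lt.1 hb₀b₁)).2
    exact ⟨a, hcb₀.trans (j.le_iff_le.2 hb₀a), (j.lt_iff_lt.2 hab₁).trans_le hb₁c'⟩

lemma OrderIso.isIntervalDense (g : β ≃o γ) : IsIntervalDense g.toOrderEmbedding :=
  fun c c' hcc' => ⟨⟨g.symm c', by simpa using hcc'⟩, ⟨g.symm c, by simpa using hcc'⟩⟩

lemma IsLUB.isLeast_upperBounds_inter {X S : Set β} {s : β} (hs : IsLUB X s) (hsS : s ∈ S) :
    IsLeast (upperBounds X ∩ S) s :=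
  ⟨⟨hs.1, hsS⟩, fun _ hw => hs.2 hw.1⟩

lemma IsCompleteLO.subtype_of_isLeast (hβ : IsCompleteLO β) {S : Set β}
    (h : ∀ X ⊆ S, ∀ s, IsLUB X s → X.Nonempty → (upperBounds X ∩ S).Nonempty →
      ∃ v, IsLeast (upperBounds X ∩ S) v) :
    IsCompleteLO S := by
  rintro X ⟨x, hx⟩ ⟨u, hu⟩
  have hXS : (↑) '' X ⊆ S := by rintro _ ⟨y, -, rfl⟩; exact y.2
  have hub : ∀ {w : S}, w ∈ upperBounds X → (w : β) ∈ upperBounds ((↑) '' X) := by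
    rintro w hw _ ⟨y, hy, rfl⟩
    exact hw hy
  obtain ⟨s, hs⟩ := hβ ((↑) '' X) ⟨x, x, hx, rfl⟩ ⟨u, hub hu⟩
  obtain ⟨v, ⟨hvX, hvS⟩, hv⟩ := h _ hXS s hs ⟨x, x, hx, rfl⟩ ⟨u, hub hu, u.2⟩
  exact ⟨⟨v, hvS⟩, fun y hy => hvX ⟨y, hy, rfl⟩, fun w hw => hv ⟨hub hw, w.2⟩⟩

lemma IsCompletion.exists_mem_of_isCompleteLO_compl {e : α ↪o β} (h : IsCompletion e)
    {I : Set β} (hI : I.Nonempty) (hIc : IsCompleteLO ↥Iᶜ) : ∃ a, e a ∈ I := by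
  by_contra! hrange
  obtain ⟨b, hb⟩ := hI
  exact eq_univ_iff_forall.1 (h.2 Iᶜ (range_subset_iff.2 hrange) hIc) b hb

theorem IsCompletion.isDenseExtension {e : α ↪o β} (h : IsCompletion e) :
    IsDenseExtension e where
  exists_le b := h.exists_mem_of_isCompleteLO_compl (I := Iic b) nonempty_Iic <|
    h.1.subtype_of_isLeast fun X hX s hs ⟨x, hx⟩ _ =>
      ⟨s, hs.isLeast_upperBounds_inter fun hsb => hX hx ((hs.1 hx).trans hsb)⟩
  exists_ge b := h.exists_mem_of_isCompleteLO_compl (I := Ici b) nonempty_Ici <|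
    h.1.subtype_of_isLeast fun X _ s hs _ ⟨u, hu, huI⟩ =>
      ⟨s, hs.isLeast_upperBounds_inter fun hbs => huI (hbs.trans (hs.2 hu))⟩
  isIntervalDense b b' hbb' := by
    constructor
    · refine h.exists_mem_of_isCompleteLO_compl (I := Ioc b b') ⟨b', hbb', le_rfl⟩ <|
        h.1.subtype_of_isLeast fun X hX s hs _ _ => ⟨s, hs.isLeast_upperBounds_inter ?_⟩
      -- the points of `X` lie outside `(b, b']` and below `s`, hence below `b`
      exact fun hsI => hsI.1.not_ge <|
        hs.2 fun x hx => not_lt.1 fun hbx => hX hx ⟨hbx, (hs.1 hx).trans hsI.2⟩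
    · refine h.exists_mem_of_isCompleteLO_compl (I := Ico b b') ⟨b, le_rfl, hbb'⟩ <|
        h.1.subtype_of_isLeast fun X _ s hs _ _ => ?_
      by_cases hsI : s ∈ Ico b b'
      -- a sup falling into the hole `[b, b')` is replaced by the first point `b'` after it
      · exact ⟨b', ⟨fun x hx => ((hs.1 hx).trans_lt hsI.2).le, fun h => h.2.false⟩,
          fun w hw => not_lt.1 fun hwb' => hw.2 ⟨hsI.1.trans (hs.2 hw.1), hwb'⟩⟩
      · exact ⟨s, hs.isLeast_upperBounds_inter hsI⟩

lemma IsIntervalDense.strictMono_preimage_Iic {e : α ↪o β} (he : IsIntervalDense e) :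
    StrictMono fun b => e ⁻¹' Iic b := by
  intro b b' hbb'
  obtain ⟨a, hba, hab'⟩ := (he hbb').1
  exact (ssubset_iff_of_subset fun x (hx : e x ≤ b) => hx.trans hbb'.le).2
    ⟨a, hab', hba.not_ge⟩

lemma IsDenseExtension.exists_preimage_Iic_eq {e : α ↪o β} (he : IsDenseExtension e)
    {j : α ↪o γ} (hγ : IsCompleteLO γ) (b : β) : ∃ c, j ⁻¹' Iic c = e ⁻¹' Iic b := by
  obtain ⟨a₀, ha₀⟩ := he.exists_le b
  obtain ⟨a₁, ha₁⟩ := he.exists_ge b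
  have hub : ∀ a', b ≤ e a' → j a' ∈ upperBounds (j '' (e ⁻¹' Iic b)) := by
    rintro a' ha' _ ⟨a, ha, rfl⟩
    exact j.le_iff_le.2 (e.le_iff_le.1 (le_trans ha ha'))
  obtain ⟨c, hc⟩ := hγ (j '' (e ⁻¹' Iic b)) ⟨j a₀, a₀, ha₀, rfl⟩ ⟨j a₁, hub a₁ ha₁⟩
  refine ⟨c, ext fun a => ⟨fun hac => not_lt.1 fun hba => ?_, fun hab => hc.1 ⟨a, hab, rfl⟩⟩⟩
  obtain ⟨a', hba', ha'a⟩ := (he.isIntervalDense hba).2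
  exact (j.lt_iff_lt.2 (e.lt_iff_lt.1 ha'a)).not_ge (le_trans hac (hc.2 (hub a' hba')))

theorem IsDenseExtension.nonempty_orderIso {e : α ↪o β} {j : α ↪o γ} (he : IsDenseExtension e)
    (hβ : IsCompleteLO β) (hj : IsDenseExtension j) (hγ : IsCompleteLO γ) :
    Nonempty (β ≃o γ) := by
  have hrange : range (fun b => e ⁻¹' Iic b) = range (fun c => j ⁻¹' Iic c) := by
    apply Subset.antisymm
    · rintro _ ⟨b, rfl⟩
      exact he.exists_preimage_Iic_eq hγ b
    · rintro _ ⟨c, rfl⟩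
      exact hj.exists_preimage_Iic_eq hβ c
  exact ⟨(he.isIntervalDense.strictMono_preimage_Iic.orderIso _).trans <|
    (OrderIso.setCongr _ _ hrange).trans
      (hj.isIntervalDense.strictMono_preimage_Iic.orderIso _).symm⟩

end Completion

section SumLex

variable {A B : Type*} [LinearOrder A] [LinearOrder B]

lemma Sum.Lex.isLUB_inr {X : Set (A ⊕ₗ B)} {b₁ t : B} (hb₁ : toLex (Sum.inr b₁) ∈ X)
    (ht : IsLUB {b | toLex (Sum.inr b) ∈ X} t) : IsLUB X (toLex (Sum.inr t)) := by
  refine ⟨?_, ?_⟩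
  · rintro (a | b) hx
    · exact Sum.Lex.inl_le_inr _ _
    · exact Sum.Lex.inr_le_inr_iff.2 (ht.1 hx)
  · rintro (a | b) hw
    · exact absurd (hw hb₁) Sum.Lex.not_inr_le_inl
    · exact Sum.Lex.inr_le_inr_iff.2 (ht.2 fun b' hb' => Sum.Lex.inr_le_inr_iff.1 (hw hb'))

lemma Sum.Lex.isLUB_inl {X : Set (A ⊕ₗ B)} {s : A} (hX : ∀ b, toLex (Sum.inr b) ∉ X)
    (hs : IsLUB {a | toLex (Sum.inl a) ∈ X} s) : IsLUB X (toLex (Sum.inl s)) := by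
  refine ⟨?_, ?_⟩
  · rintro (a | b) hx
    · exact Sum.Lex.inl_le_inl_iff.2 (hs.1 hx)
    · exact absurd hx (hX b)
  · rintro (a | b) hw
    · exact Sum.Lex.inl_le_inl_iff.2 (hs.2 fun a' ha' => Sum.Lex.inl_le_inl_iff.1 (hw ha'))
    · exact Sum.Lex.inl_le_inr _ _

lemma isCompleteLO_sumLex (hA : IsCompleteLO A) (hB : IsCompleteLO B)
    (h : (∃ a : A, IsTop a) ∨ ∀ _ : B, ∃ b₀ : B, IsBot b₀) : IsCompleteLO (A ⊕ₗ B) := by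
  rintro X hX ⟨u, hu⟩
  by_cases hr : ∃ b, toLex (Sum.inr b) ∈ X
  · obtain ⟨b₁, hb₁⟩ := hr
    rcases u with a | bu
    · exact absurd (hu hb₁) Sum.Lex.not_inr_le_inl
    obtain ⟨t, ht⟩ := hB {b | toLex (Sum.inr b) ∈ X} ⟨b₁, hb₁⟩
      ⟨bu, fun b hb => Sum.Lex.inr_le_inr_iff.1 (hu hb)⟩
    exact ⟨_, Sum.Lex.isLUB_inr hb₁ ht⟩
  simp only [not_exists] at hr
  obtain ⟨a₀ | b₀, hx₀⟩ := hX
  swap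
  · exact absurd hx₀ (hr b₀)
  by_cases hbdd : BddAbove {a | toLex (Sum.inl a) ∈ X}
  · obtain ⟨s, hs⟩ := hA {a | toLex (Sum.inl a) ∈ X} ⟨a₀, hx₀⟩ hbdd
    exact ⟨_, Sum.Lex.isLUB_inl hr hs⟩
  -- the left part is unbounded in `A`, so the sup is the least element of `B`
  rcases u with a | bu
  · exact absurd ⟨a, fun a' ha' => Sum.Lex.inl_le_inl_iff.1 (hu ha')⟩ hbdd
  obtain ⟨b₀, hb₀⟩ := h.resolve_left (fun ⟨a, ha⟩ => hbdd ⟨a, fun a' _ => ha a'⟩) bu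
  refine ⟨toLex (Sum.inr b₀), ?_, ?_⟩
  · rintro (a | b) hx
    · exact Sum.Lex.inl_le_inr _ _
    · exact absurd hx (hr b)
  · rintro (a | b) hw
    · exact absurd ⟨a, fun a' ha' => Sum.Lex.inl_le_inl_iff.1 (hw ha')⟩ hbdd
    · exact Sum.Lex.inr_le_inr_iff.2 (hb₀ b)

end SumLex

section DotSum

variable {α β : Type*} [LinearOrder α] [LinearOrder β]

structure IsCompleteBounded (α : Type*) [LinearOrder α] : Prop where
  isCompleteLO : IsCompleteLO α
  exists_isBot : ∃ a : α, IsBot a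
  exists_isTop : ∃ a : α, IsTop a

lemma IsCompleteLO.of_orderIso (g : α ≃o β) (h : IsCompleteLO α) : IsCompleteLO β :=
  fun s hs hbdd =>
    let ⟨a, ha⟩ := h (g ⁻¹' s) (hs.preimage g.surjective) (g.bddAbove_preimage.2 hbdd)
    ⟨g a, g.isLUB_preimage.1 ha⟩

lemma IsCompleteBounded.of_orderIso (g : α ≃o β) (h : IsCompleteBounded α) :
    IsCompleteBounded β where
  isCompleteLO := h.isCompleteLO.of_orderIso g
  exists_isBot := let ⟨a, ha⟩ := h.exists_isBot; ⟨g a, fun _ => g.le_symm_apply.1 (ha _)⟩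
  exists_isTop := let ⟨a, ha⟩ := h.exists_isTop; ⟨g a, fun _ => g.symm_apply_le.1 (ha _)⟩

lemma isCompleteBounded_of_subsingleton [Subsingleton α] (a : α) : IsCompleteBounded α where
  isCompleteLO _ := fun ⟨x, hx⟩ _ =>
    ⟨x, fun y _ => (Subsingleton.elim y x).le, fun _ hy => hy hx⟩
  exists_isBot := ⟨a, fun b => (Subsingleton.elim a b).le⟩
  exists_isTop := ⟨a, fun b => (Subsingleton.elim b a).le⟩

lemma IsCompleteLO.subtype_not_isBot (hβ : IsCompleteLO β) (P : Prop) :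
    IsCompleteLO {y : β // ¬(P ∧ ∀ z, y ≤ z)} :=
  hβ.subtype_of_isLeast (S := {y | ¬(P ∧ ∀ z, y ≤ z)}) fun _ hX s hs ⟨_, hx⟩ _ =>
    ⟨s, hs.isLeast_upperBounds_inter fun ⟨hP, hs'⟩ =>
      hX hx ⟨hP, fun z => (hs.1 hx).trans (hs' z)⟩⟩

lemma isCompleteLO_dotSum (hα : IsCompleteLO α) (hβ : IsCompleteLO β)
    (h : (∃ a : α, IsTop a) ∨ ∃ b : β, IsBot b) : IsCompleteLO (dotSum α β) := by
  refine isCompleteLO_sumLex hα (hβ.subtype_not_isBot _) ?_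
  by_cases hα' : ∃ a : α, IsTop a
  · exact Or.inl hα'
  obtain ⟨b₀, hb₀⟩ := h.resolve_left hα'
  exact Or.inr fun _ => ⟨⟨b₀, fun h => hα' h.1⟩, fun y => hb₀ y⟩

lemma isBot_dotSum_inl {a : α} (ha : IsBot a) : IsBot (toLex (Sum.inl a) : dotSum α β) := by
  rintro (a' | b)
  · exact Sum.Lex.inl_le_inl_iff.2 (ha a')
  · exact Sum.Lex.inl_le_inr _ _

lemma exists_isTop_dotSum_punit : ∃ t : dotSum α PUnit, IsTop t := by
  by_cases hα : ∃ a : α, IsTop a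
  · obtain ⟨a, ha⟩ := hα
    refine ⟨toLex (Sum.inl a), ?_⟩
    rintro (a' | ⟨u, hu⟩)
    · exact Sum.Lex.inl_le_inl_iff.2 (ha a')
    · exact absurd ⟨⟨a, ha⟩, fun _ => le_rfl⟩ hu
  · refine ⟨toLex (Sum.inr ⟨PUnit.unit, fun h => hα h.1⟩), ?_⟩
    rintro (a' | u)
    · exact Sum.Lex.inl_le_inr _ _
    · exact Sum.Lex.inr_le_inr_iff.2 le_rfl

lemma isCompleteBounded_punit_dotSum_dotSum_punit (hβ : IsCompleteLO β) :
    IsCompleteBounded (dotSum (dotSum PUnit β) PUnit) where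
  isCompleteLO :=
    isCompleteLO_dotSum
      (isCompleteLO_dotSum (isCompleteBounded_of_subsingleton PUnit.unit).isCompleteLO hβ
        (Or.inl ⟨PUnit.unit, fun _ => le_rfl⟩))
      (isCompleteBounded_of_subsingleton PUnit.unit).isCompleteLO
      (Or.inr ⟨PUnit.unit, fun _ => le_rfl⟩)
  exists_isBot := ⟨_, isBot_dotSum_inl (isBot_dotSum_inl (a := PUnit.unit) fun _ => le_rfl)⟩
  exists_isTop := exists_isTop_dotSum_punit

variable (α β)

/-- The bottom of `β`, if any, goes to the point of `𝟏` it is identified with. -/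
noncomputable def punitDotSumEmbedding : β ↪o dotSum PUnit β :=
  open Classical in
  OrderEmbedding.ofStrictMono
    (fun y => if hy : ∀ z, y ≤ z then toLex (Sum.inl PUnit.unit)
      else toLex (Sum.inr ⟨y, fun h => hy h.2⟩))
    (by
      intro y y' hyy'
      simp only [dif_neg fun h : ∀ z, y' ≤ z => (h y).not_gt hyy']
      split_ifs
      · exact Sum.Lex.inl_lt_inr _ _
      · exact Sum.Lex.inr_lt_inr_iff.2 hyy')

def dotSumPUnitEmbedding : α ↪o dotSum α PUnit :=
  OrderEmbedding.ofStrictMono (fun a => toLex (Sum.inl a)) Sum.Lex.inl_strictMono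

variable {α β}

lemma isIntervalDense_punitDotSumEmbedding : IsIntervalDense (punitDotSumEmbedding β) := by
  have hmem : ∀ y hy, punitDotSumEmbedding β y = toLex (Sum.inr ⟨y, hy⟩) := fun y hy =>
    dif_neg fun h => hy ⟨⟨PUnit.unit, fun _ => le_rfl⟩, h⟩
  rintro t (u | ⟨y', hy'⟩) htt'
  · rcases t with u' | _
    · exact absurd (Sum.Lex.inl_lt_inl_iff.1 htt') (lt_irrefl _)
    · exact absurd htt' Sum.Lex.not_inr_lt_inl
  refine ⟨⟨y', by rw [hmem y' hy']; exact ⟨htt', le_rfl⟩⟩, ?_⟩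
  rcases t with u | ⟨y, hy⟩
  · obtain ⟨y, hy⟩ : ∃ y, y < y' := by
      by_contra! h
      exact hy' ⟨⟨PUnit.unit, fun _ => le_rfl⟩, h⟩
    exact ⟨y, isBot_dotSum_inl (fun _ => le_rfl) _,
      lt_of_lt_of_eq ((punitDotSumEmbedding β).lt_iff_lt.2 hy) (hmem y' hy')⟩
  · exact ⟨y, by rw [hmem y hy]; exact ⟨le_rfl, htt'⟩⟩

lemma isIntervalDense_dotSumPUnitEmbedding : IsIntervalDense (dotSumPUnitEmbedding α) := by
  rintro t (a' | ⟨u, hu⟩) htt'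
  · rcases t with a | _
    · exact ⟨⟨a', htt', le_rfl⟩, ⟨a, le_rfl, htt'⟩⟩
    · exact absurd htt' Sum.Lex.not_inr_lt_inl
  · rcases t with a | _
    · obtain ⟨a', ha'⟩ : ∃ a', a < a' := by
        by_contra! h
        exact hu ⟨⟨a, h⟩, fun _ => le_rfl⟩
      exact ⟨⟨a', Sum.Lex.inl_lt_inl_iff.2 ha', Sum.Lex.inl_le_inr _ _⟩,
        ⟨a, le_rfl, Sum.Lex.inl_lt_inr _ _⟩⟩
    · exact absurd (Sum.Lex.inr_lt_inr_iff.1 htt') (lt_irrefl _)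

end DotSum

section SigmaLex

variable {I J : Type*} [LinearOrder I] [LinearOrder J] {κ : I → Type*} {T : J → Type*}
  [∀ i, LinearOrder (κ i)] [∀ j, LinearOrder (T j)]

lemma Sigma.Lex.fst_le_fst {a b : Σₗ j, T j} (h : a ≤ b) : (ofLex a).1 ≤ (ofLex b).1 := by
  rcases Sigma.Lex.le_def.1 h with h | ⟨h, -⟩
  · exact h.le
  · exact h.le

lemma Sigma.Lex.mk_le_mk_iff {j : J} {t t' : T j} :
    (toLex ⟨j, t⟩ : Σₗ j, T j) ≤ toLex ⟨j, t'⟩ ↔ t ≤ t' := by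
  refine ⟨fun h => ?_, fun h => Sigma.Lex.le_def.2 (Or.inr ⟨rfl, h⟩)⟩
  rcases Sigma.Lex.le_def.1 h with h | ⟨_, h'⟩
  · exact absurd h (lt_irrefl j)
  · exact h'

def OrderEmbedding.sigmaLexMap (φ : I ↪o J) (ℓ : ∀ i, κ i ↪o T (φ i)) :
    (Σₗ i, κ i) ↪o Σₗ j, T j :=
  OrderEmbedding.ofStrictMono (fun p => toLex ⟨φ (ofLex p).1, ℓ _ (ofLex p).2⟩) <| by
    rintro ⟨i, x⟩ ⟨i', x'⟩ h
    cases h with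
    | left _ _ h => exact Sigma.Lex.left _ _ (φ.lt_iff_lt.2 h)
    | right _ _ h => exact Sigma.Lex.right _ _ ((ℓ i).lt_iff_lt.2 h)

theorem isDenseExtension_sigmaLexMap [∀ i, Nonempty (κ i)] (φ : I ↪o J)
    (ℓ : ∀ i, κ i ↪o T (φ i)) (hlo : ∀ j, ∃ i, φ i < j) (hhi : ∀ j, ∃ i, j < φ i)
    (hφ : ∀ ⦃j j'⦄, j < j' → ∃ i, φ i ∈ Ioo j j') (hsub : ∀ j ∉ range φ, Subsingleton (T j))
    (hℓ : ∀ i, IsIntervalDense (ℓ i)) : IsDenseExtension (φ.sigmaLexMap ℓ) where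
  exists_le := by
    rintro ⟨j, t⟩
    obtain ⟨i, hi⟩ := hlo j
    exact ⟨toLex ⟨i, Classical.arbitrary _⟩, Sigma.Lex.left _ _ hi⟩
  exists_ge := by
    rintro ⟨j, t⟩
    obtain ⟨i, hi⟩ := hhi j
    exact ⟨toLex ⟨i, Classical.arbitrary _⟩, Sigma.Lex.left _ _ hi⟩
  isIntervalDense := by
    rintro ⟨j, t⟩ ⟨j', t'⟩ h
    cases h with
    | left _ _ hjj' =>
      obtain ⟨i, hi⟩ := hφ hjj'
      let x : κ i := Classical.arbitrary _
      exact ⟨⟨toLex ⟨i, x⟩, Sigma.Lex.left _ _ hi.1, Sigma.Lex.left _ _ hi.2⟩,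
        ⟨toLex ⟨i, x⟩, Sigma.Lex.left _ _ hi.1, Sigma.Lex.left _ _ hi.2⟩⟩
    | right _ _ htt' =>
      obtain ⟨i, rfl⟩ : j ∈ range φ := by
        by_contra hj
        have := hsub j hj
        exact htt'.ne (Subsingleton.elim _ _)
      obtain ⟨⟨x, hx⟩, ⟨y, hy⟩⟩ := hℓ i htt'
      exact ⟨⟨toLex ⟨i, x⟩, Sigma.Lex.right _ _ hx.1, Sigma.Lex.mk_le_mk_iff.2 hx.2⟩,
        ⟨toLex ⟨i, y⟩, Sigma.Lex.mk_le_mk_iff.2 hy.1, Sigma.Lex.right _ _ hy.2⟩⟩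

end SigmaLex

lemma isCompleteLO_sigmaLex {J : Type*} [ConditionallyCompleteLinearOrder J] {T : J → Type*}
    [∀ j, LinearOrder (T j)] (hT : ∀ j, IsCompleteBounded (T j)) : IsCompleteLO (Σₗ j, T j) := by
  rintro X ⟨⟨j₁, t₁⟩, hx₁⟩ ⟨u, hu⟩
  set P : Set J := {j | ∃ t : T j, toLex ⟨j, t⟩ ∈ X}
  have hP : IsLUB P (sSup P) := isLUB_csSup ⟨j₁, t₁, hx₁⟩
    ⟨(ofLex u).1, by rintro j ⟨t, ht⟩; exact Sigma.Lex.fst_le_fst (hu ht)⟩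
  -- the sup of `X` lies over `sSup P`: at the sup of the points of `X` in that fibre if there
  -- are any, at the bottom of the fibre otherwise
  obtain ⟨t₀, ht₀⟩ : ∃ t₀ : T (sSup P), IsLUB {t | toLex ⟨sSup P, t⟩ ∈ X} t₀ := by
    by_cases hmem : sSup P ∈ P
    · obtain ⟨t, ht⟩ := hmem
      obtain ⟨tb, htb⟩ := (hT (sSup P)).exists_isTop
      exact (hT (sSup P)).isCompleteLO _ ⟨t, ht⟩ ⟨tb, fun t _ => htb t⟩
    · obtain ⟨tb, htb⟩ := (hT (sSup P)).exists_isBot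
      exact ⟨tb, fun t ht => absurd ⟨t, ht⟩ hmem, fun t _ => htb t⟩
  refine ⟨toLex ⟨sSup P, t₀⟩, ?_, ?_⟩
  · rintro ⟨j, t⟩ hx
    rcases (hP.1 ⟨t, hx⟩ : j ≤ sSup P).lt_or_eq with h | rfl
    · exact Sigma.Lex.left _ _ h
    · exact Sigma.Lex.mk_le_mk_iff.2 (ht₀.1 hx)
  · rintro ⟨j, t⟩ hw
    rcases (hP.2 fun j' ⟨t', ht'⟩ => Sigma.Lex.fst_le_fst (hw ht') : sSup P ≤ j).lt_or_eq with
      h | rfl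
    · exact Sigma.Lex.left _ _ h
    · exact Sigma.Lex.mk_le_mk_iff.2 (ht₀.2 fun t' ht' => Sigma.Lex.mk_le_mk_iff.1 (hw ht'))

theorem completion_of_shuffle_general {n : ℕ} (L : Fin n → Type)
    [∀ i, LinearOrder (L i)] [∀ i, Nonempty (L i)]
    (f : ℚ → Fin n)
    (C : Fin n → Type) [∀ i, LinearOrder (C i)]
    (e : ∀ i, L i ↪o C i) (he : ∀ i, IsCompletion (e i))
    (D : Type) [LinearOrder D] (eD : (Σₗ q : ℚ, L (f q)) ↪o D) (heD : IsCompletion eD)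
    (T : ℝ → Type) [∀ r, LinearOrder (T r)]
    (hTq : ∀ q : ℚ, Nonempty (T q ≃o dotSum (dotSum PUnit (C (f q))) PUnit))
    (hTirr : ∀ r : ℝ, Irrational r → Nonempty (T r ≃o PUnit)) :
    Nonempty (D ≃o Σₗ r : ℝ, T r) := by
  let g q : dotSum (dotSum PUnit (C (f q))) PUnit ≃o T (Rat.castOrderEmbedding q) :=
    (hTq q).some.symm
  let ℓ q : L (f q) ↪o T (Rat.castOrderEmbedding q) :=
    (((e (f q)).trans (punitDotSumEmbedding _)).trans (dotSumPUnitEmbedding _)).trans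
      (g q).toOrderEmbedding
  have hℓ q : IsIntervalDense (ℓ q) :=
    (((he (f q)).isDenseExtension.isIntervalDense.trans isIntervalDense_punitDotSumEmbedding).trans
      isIntervalDense_dotSumPUnitEmbedding).trans (g q).isIntervalDense
  have hsub r (hr : Irrational r) : Subsingleton (T r) := (hTirr r hr).some.toEquiv.subsingleton
  have hT r : IsCompleteBounded (T r) := by
    by_cases hr : Irrational r
    · have := hsub r hr
      exact isCompleteBounded_of_subsingleton ((hTirr r hr).some.symm PUnit.unit)
    · obtain ⟨q, rfl⟩ := not_not.1 hr
      exact (isCompleteBounded_punit_dotSum_dotSum_punit (he (f q)).1).of_orderIso (g q)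
  exact heD.isDenseExtension.nonempty_orderIso heD.1
    (isDenseExtension_sigmaLexMap _ ℓ exists_rat_lt exists_rat_gt (fun _ _ => exists_rat_btwn)
      hsub hℓ)
    (isCompleteLO_sigmaLex hT)

/-- the completion of the shuffle `Ξ(L₁,…,Lₙ)` of nonempty linear orders is
`Σ_{r ∈ ℝ} T_r`, where `T_r = 𝟏 ∔ 𝒞(L_j) ∔ 𝟏` when `r ∈ D_j` and `T_r = 𝟏` when `r` is
irrational. -/
theorem completion_of_shuffle {n : ℕ} (hn : 1 ≤ n) (L : Fin n → Type)
    [∀ i, LinearOrder (L i)] [∀ i, Nonempty (L i)]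
    (f : ℚ → Fin n) (hf : ∀ i : Fin n, DenseQ (f ⁻¹' {i}))
    (C : Fin n → Type) [∀ i, LinearOrder (C i)]
    (e : ∀ i, L i ↪o C i) (he : ∀ i, IsCompletion (e i))
    (D : Type) [LinearOrder D] (eD : (Σₗ q : ℚ, L (f q)) ↪o D) (heD : IsCompletion eD)
    (T : ℝ → Type) [∀ r, LinearOrder (T r)]
    (hTq : ∀ q : ℚ, Nonempty (T q ≃o dotSum (dotSum PUnit (C (f q))) PUnit))
    (hTirr : ∀ r : ℝ, Irrational r → Nonempty (T r ≃o PUnit)) :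
    Nonempty (D ≃o Σₗ r : ℝ, T r) :=
  completion_of_shuffle_general L f C e he D eD heD T hTq hTirr
end
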